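/- arXiv:2109.08897 — 13 statements merged into one kernel-verified Lean document; each statement's English description precedes it below -/
import Mathlib

section
/- Let (X,d) be a proper geodesic metric space and Ω ⊊ X a bounded domain (nonempty open connected set). Let u : Ω → ℝ be bounded below and satisfy comparison with cones from below (for every open O compactly contained in Ω, every x̂ ∈ Ω \ O, a ∈ ℝ, κ ≤ 0, if u ≥ a + κ·d(x̂,·) on ∂O then u ≥ a + κ·d(x̂,·) on the closure of O). Then u is locally Lipschitz in Ω; more precisely, for every x ∈ Ω and every y ∈ B_r(x) with 0 < 2r < d(x, ∂Ω), one has |u(x) − u(y)| ≤ ((max{u(x),u(y)} − inf_Ω u)/r) · d(x,y). -/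
open Metric Filter Set Topology

/-- A geodesic space: any two points are joined by an isometric copy of an interval. -/
def IsGeodesicSpace (X : Type*) [MetricSpace X] : Prop :=
  ∀ x y : X, ∃ γ : ℝ → X, γ 0 = x ∧ γ (dist x y) = y ∧ ∀ s t : ℝ, dist (γ s) (γ t) = |s - t|

/-- The subslope `|∇⁻ u|(x) = limsup_{y→x} max{u(x)-u(y),0}/d(x,y)`. -/
noncomputable def mSubslope {X : Type*} [MetricSpace X] (u : X → ℝ) (x : X) : ℝ :=
  Filter.limsup (fun y => max (u x - u y) 0 / dist x y) (𝓝[≠] x)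

/-- The slope `|∇ u|(x) = limsup_{y→x} |u(y)-u(x)|/d(x,y)`. -/
noncomputable def mSlope {X : Type*} [MetricSpace X] (u : X → ℝ) (x : X) : ℝ :=
  Filter.limsup (fun y => |u y - u x| / dist x y) (𝓝[≠] x)

/-- Comparison with cones from below in `Ω`: for every open `O` compactly contained in `Ω`,
apex `xhat ∈ Ω \ O`, `a ∈ ℝ`, `κ ≤ 0`, if `u ≥ a + κ d(xhat,·)` on `∂O` then the same holds on
the closure of `O`. -/
def CompCones {X : Type*} [MetricSpace X] (Ω : Set X) (u : X → ℝ) : Prop :=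
  ∀ O : Set X, IsOpen O → IsCompact (closure O) → closure O ⊆ Ω →
    ∀ xhat ∈ Ω \ O, ∀ a κ : ℝ, κ ≤ 0 →
      (∀ z ∈ frontier O, a + κ * dist xhat z ≤ u z) →
      ∀ z ∈ closure O, a + κ * dist xhat z ≤ u z

/-- Locally Lipschitz on a set. -/
def LocLipOn {X : Type*} [MetricSpace X] (s : Set X) (u : X → ℝ) : Prop :=
  ∀ x ∈ s, ∃ K : NNReal, ∃ t ∈ 𝓝[s] x, LipschitzOnWith K u t

lemma ball_infDist_subset {X : Type*} [MetricSpace X] (hgeo : IsGeodesicSpace X)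
    {Ω : Set X} (hΩo : IsOpen Ω) {x : X} (hx : x ∈ Ω) :
    Metric.ball x (Metric.infDist x (frontier Ω)) ⊆ Ω := by
  intro z hz
  by_contra hzΩ
  obtain ⟨γ, hγ0, hγd, hγiso⟩ := hgeo x z
  have hcont : Continuous γ := by
    have : LipschitzWith 1 γ := LipschitzWith.of_dist_le_mul fun a b => by
      rw [hγiso]; simp [Real.dist_eq]
    exact this.continuous
  set s : Set X := γ '' Icc 0 (dist x z) with hs
  have hconn : IsPreconnected s := isPreconnected_Icc.image γ hcont.continuousOn
  have hxs : x ∈ s := ⟨0, ⟨le_refl 0, dist_nonneg⟩, hγ0⟩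
  have hzs : z ∈ s := ⟨dist x z, ⟨dist_nonneg, le_refl _⟩, hγd⟩
  -- s misses frontier Ω
  have hmiss : ∀ t ∈ Icc (0:ℝ) (dist x z), γ t ∉ frontier Ω := by
    intro t ht hft
    have h1 : Metric.infDist x (frontier Ω) ≤ dist x (γ t) := Metric.infDist_le_dist_of_mem hft
    have h2 : dist x (γ t) = t := by
      rw [← hγ0, hγiso]; rw [abs_sub_comm]; rw [abs_of_nonneg (by linarith [ht.1])]; ring_nf
    have h3 := hz
    rw [Metric.mem_ball, dist_comm] at h3
    rw [h2] at h1
    linarith [ht.2]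
  have hsub : s ⊆ Ω ∪ (closure Ω)ᶜ := by
    rintro w ⟨t, ht, rfl⟩
    by_contra hw
    rw [mem_union, not_or] at hw
    exact hmiss t ht ⟨not_not.mp (by simpa using hw.2), by
      rw [← hΩo.interior_eq] at hw; exact hw.1⟩
  have hdisj : Disjoint Ω ((closure Ω)ᶜ) :=
    Set.disjoint_compl_right_iff_subset.mpr subset_closure
  rcases hconn.subset_or_subset hΩo (isClosed_closure.isOpen_compl) hdisj hsub with h | h
  · exact hzΩ (h hzs)
  · exact (h hxs) (subset_closure hx)

lemma cone_est {X : Type*} [MetricSpace X] [ProperSpace X] {Ω : Set X} {u : X → ℝ}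
    (hbdd : BddBelow (u '' Ω)) (hcc : CompCones Ω u) {x : X} (hx : x ∈ Ω)
    {r : ℝ} (hr : 0 < r) (hsub : Metric.closedBall x r ⊆ Ω) {y : X}
    (hy : y ∈ Metric.ball x r) :
    u x - u y ≤ (u x - sInf (u '' Ω)) / r * dist x y := by
  set m := sInf (u '' Ω) with hm
  have hmle : ∀ z ∈ Ω, m ≤ u z := fun z hz => csInf_le hbdd ⟨z, hz, rfl⟩
  by_cases hyx : y = x
  · subst hyx; simp
  set O : Set X := Metric.ball x r \ {x} with hO
  have hOopen : IsOpen O := IsOpen.sdiff Metric.isOpen_ball isClosed_singleton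
  have hclsub : closure O ⊆ Metric.closedBall x r :=
    closure_minimal (Set.diff_subset.trans Metric.ball_subset_closedBall) Metric.isClosed_closedBall
  have hcompact : IsCompact (closure O) :=
    (isCompact_closedBall x r).of_isClosed_subset isClosed_closure hclsub
  have hclΩ : closure O ⊆ Ω := hclsub.trans hsub
  have hxO : x ∈ Ω \ O := ⟨hx, by simp [hO]⟩
  have hκ : (m - u x) / r ≤ 0 := div_nonpos_of_nonpos_of_nonneg (by linarith [hmle x hx]) hr.le
  have hbound : ∀ z ∈ frontier O, u x + (m - u x) / r * dist x z ≤ u z := by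
    intro z hz
    have hzcl : z ∈ closure O := frontier_subset_closure hz
    have hznO : z ∉ O := by
      rw [frontier, hOopen.interior_eq] at hz; exact hz.2
    by_cases hzx : z = x
    · subst hzx; simp
    · have h1 : dist x z ≤ r := Metric.mem_closedBall'.mp (hclsub hzcl)
      have h2 : ¬ z ∈ Metric.ball x r := fun hb => hznO ⟨hb, hzx⟩
      have h3 : dist x z = r := le_antisymm h1 (by
        rw [Metric.mem_ball, dist_comm] at h2; linarith [not_lt.mp h2])
      rw [h3, div_mul_cancel₀ _ hr.ne']
      linarith [hmle z (hclΩ hzcl)]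
  have hyO : y ∈ closure O := subset_closure ⟨hy, hyx⟩
  have := hcc O hOopen hcompact hclΩ x hxO (u x) ((m - u x) / r) hκ hbound y hyO
  have hring : (u x - m) / r * dist x y = -((m - u x) / r * dist x y) := by ring
  linarith

theorem stmt0 {X : Type*} [MetricSpace X] [ProperSpace X] (hgeo : IsGeodesicSpace X)
    (Ω : Set X) (hΩo : IsOpen Ω) (hΩc : IsConnected Ω) (hΩb : Bornology.IsBounded Ω)
    (hΩne : Ω ≠ Set.univ)
    (u : X → ℝ) (hbdd : BddBelow (u '' Ω)) (hcc : CompCones Ω u) :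
    ∀ x ∈ Ω, ∀ r : ℝ, 0 < r → 2 * r < Metric.infDist x (frontier Ω) →
      ∀ y ∈ Metric.ball x r,
        |u x - u y| ≤ (max (u x) (u y) - sInf (u '' Ω)) / r * dist x y := by
  intro x hx r hr h2r y hy
  have hball := ball_infDist_subset hgeo hΩo hx
  have hsubx : Metric.closedBall x r ⊆ Ω := fun z hz => hball (by
    rw [Metric.mem_ball]
    rw [Metric.mem_closedBall] at hz
    linarith)
  have hsuby : Metric.closedBall y r ⊆ Ω := fun z hz => hball (by
    rw [Metric.mem_ball]
    rw [Metric.mem_closedBall] at hz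
    have hyb := Metric.mem_ball.mp hy
    calc dist z x ≤ dist z y + dist y x := dist_triangle z y x
      _ < r + r := by linarith
      _ < Metric.infDist x (frontier Ω) := by linarith)
  have hyΩ : y ∈ Ω := hsuby (Metric.mem_closedBall_self hr.le)
  have hxy : x ∈ Metric.ball y r := by rw [Metric.mem_ball, dist_comm]; exact hy
  have est1 := cone_est hbdd hcc hx hr hsubx hy
  have est2 := cone_est hbdd hcc hyΩ hr hsuby hxy
  set m := sInf (u '' Ω) with hm
  have hmx : m ≤ u x := csInf_le hbdd ⟨x, hx, rfl⟩
  have hmy : m ≤ u y := csInf_le hbdd ⟨y, hyΩ, rfl⟩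
  have hd : dist y x = dist x y := dist_comm y x
  have h1 : (u x - m) / r * dist x y ≤ (max (u x) (u y) - m) / r * dist x y := by
    gcongr
    exact le_max_left _ _
  have h2 : (u y - m) / r * dist y x ≤ (max (u x) (u y) - m) / r * dist x y := by
    rw [hd]; gcongr; exact le_max_right _ _
  rw [abs_sub_le_iff]
  exact ⟨est1.trans h1, est2.trans h2⟩
end

section
/- Let (X,d) be a proper geodesic metric space, Ω ⊊ X a bounded domain, and u : Ω → ℝ bounded below satisfying comparison with cones from below in Ω. Then for every x₀ ∈ Ω the subslope and the slope of u at x₀ coincide: |∇u|(x₀) = |∇⁻u|(x₀), where |∇u|(x₀) = limsup_{y→x₀} |u(y)−u(x₀)|/d(x₀,y) and |∇⁻u|(x₀) = limsup_{y→x₀} max{u(x₀)−u(y),0}/d(x₀,y). -/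
open Metric Filter Set Topology

lemma coneA {X : Type*} [MetricSpace X] [ProperSpace X] {Ω : Set X} {u : X → ℝ}
    (hcc : CompCones Ω u) {x : X} (hx : x ∈ Ω) {r M : ℝ} (hr : 0 < r) (hM : 0 ≤ M)
    (hball : closedBall x r ⊆ Ω) (hb : ∀ z ∈ sphere x r, u x - u z ≤ M * r) :
    ∀ y ∈ ball x r, u x - u y ≤ M * dist x y := by
  intro y hy
  rcases eq_or_ne y x with rfl | hne
  · simp
  set O := ball x r ∩ {x}ᶜ with hO
  have hOopen : IsOpen O := isOpen_ball.inter isClosed_singleton.isOpen_compl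
  have hOcb : closure O ⊆ closedBall x r :=
    closure_minimal (inter_subset_left.trans ball_subset_closedBall) Metric.isClosed_closedBall
  have hOcpt : IsCompact (closure O) :=
    (isCompact_closedBall x r).of_isClosed_subset isClosed_closure hOcb
  have hfr : frontier O ⊆ sphere x r ∪ {x} := by
    refine (frontier_inter_subset _ _).trans ?_
    rintro z (⟨hz, -⟩ | ⟨-, hz⟩)
    · exact Or.inl (frontier_ball_subset_sphere hz)
    · rw [frontier_compl] at hz
      have : z ∈ closure ({x} : Set X) := frontier_subset_closure hz
      rw [closure_singleton] at this
      exact Or.inr this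
  have := hcc O hOopen hOcpt (hOcb.trans hball) x ⟨hx, fun h => h.2 rfl⟩ (u x) (-M)
    (neg_nonpos.2 hM) ?_ y (subset_closure ⟨hy, hne⟩)
  · linarith [this]
  · intro z hz
    rcases hfr hz with hz | hz
    · have hd : dist x z = r := by rw [← mem_sphere']; exact hz
      have h2 := hb z hz
      rw [hd]; linarith
    · rcases hz with rfl
      simp

theorem stmt1 {X : Type*} [MetricSpace X] [ProperSpace X] (hgeo : IsGeodesicSpace X)
    (Ω : Set X) (hΩo : IsOpen Ω) (hΩc : IsConnected Ω) (hΩb : Bornology.IsBounded Ω)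
    (hΩne : Ω ≠ Set.univ)
    (u : X → ℝ) (hbdd : BddBelow (u '' Ω)) (hcc : CompCones Ω u) :
    ∀ x₀ ∈ Ω, mSlope u x₀ = mSubslope u x₀ := by
  intro x₀ hx₀
  obtain ⟨w, hw⟩ := (Set.ne_univ_iff_exists_notMem Ω).1 hΩne
  have hwx : x₀ ≠ w := fun h => hw (h ▸ hx₀)
  have hdw : 0 < dist x₀ w := dist_pos.2 hwx
  -- x₀ is not isolated
  have hnb : (𝓝[≠] x₀).NeBot := by
    rw [← mem_closure_iff_nhdsWithin_neBot, Metric.mem_closure_iff]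
    intro ε hε
    obtain ⟨γ, hγ0, hγw, hγd⟩ := hgeo x₀ w
    set t := min (ε / 2) (dist x₀ w) with ht'
    have ht : 0 < t := lt_min (by linarith) hdw
    have hdt : dist x₀ (γ t) = t := by
      rw [← hγ0, hγd, zero_sub, abs_neg, abs_of_nonneg ht.le]
    refine ⟨γ t, fun h => ?_, ?_⟩
    · rw [mem_singleton_iff] at h
      rw [h, dist_self] at hdt
      exact ht.ne' hdt.symm
    · rw [hdt]
      exact lt_of_le_of_lt (min_le_left _ _) (by linarith)
  -- get a good radius (opaque)
  obtain ⟨R, hR, hRΩ⟩ : ∃ R : ℝ, 0 < R ∧ closedBall x₀ (2 * R) ⊆ Ω := by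
    obtain ⟨ε₀, hε₀, hballΩ⟩ := Metric.mem_nhds_iff.1 (hΩo.mem_nhds hx₀)
    exact ⟨ε₀ / 4, by positivity, fun z hz => hballΩ (by
      rw [mem_ball]; rw [mem_closedBall] at hz; linarith)⟩
  -- lower bound (opaque)
  obtain ⟨m, hm⟩ : ∃ m : ℝ, ∀ z ∈ Ω, m ≤ u z :=
    ⟨sInf (u '' Ω), fun z hz => csInf_le hbdd ⟨z, hz, rfl⟩⟩
  -- key cone estimate
  have key : ∀ x ∈ Ω, ∀ r : ℝ, 0 < r → closedBall x r ⊆ Ω →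
      ∀ y ∈ ball x r, u x - u y ≤ ((u x - m) / r) * dist x y := by
    intro x hxΩ r hr hsub
    refine coneA hcc hxΩ hr (div_nonneg (sub_nonneg.2 (hm x hxΩ)) hr.le) hsub ?_
    intro z hz
    have h1 : m ≤ u z := hm z (hsub (sphere_subset_closedBall hz))
    have h2 : (u x - m) / r * r = u x - m := div_mul_cancel₀ _ hr.ne'
    linarith
  have hux₀ : m ≤ u x₀ := hm x₀ hx₀
  -- local Lipschitz-type bounds with an opaque constant K
  obtain ⟨K, hK0, hup, hdown⟩ : ∃ K : ℝ, 0 ≤ K ∧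
      (∀ y ∈ ball x₀ (R / 2), u y - u x₀ ≤ K * dist x₀ y) ∧
      (∀ y ∈ ball x₀ (R / 2), u x₀ - u y ≤ K * dist x₀ y) := by
    refine ⟨2 * (u x₀ - m) / R, div_nonneg (by linarith) hR.le, ?_, ?_⟩
    · intro y hy
      have hyd : dist y x₀ < R / 2 := mem_ball.1 hy
      have hyΩ : y ∈ Ω := hRΩ (by rw [mem_closedBall]; linarith)
      have hsub : closedBall y R ⊆ Ω := by
        intro z hz
        apply hRΩ
        rw [mem_closedBall] at hz ⊢
        have := dist_triangle z y x₀
        linarith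
      have h1 := key y hyΩ R hR hsub x₀ (by rw [mem_ball, dist_comm]; linarith)
      have hym : 0 ≤ u y - m := sub_nonneg.2 (hm y hyΩ)
      -- boundedness: u y - m ≤ 2 (u x₀ - m)
      have h2 : u y - m ≤ 2 * (u x₀ - m) := by
        have h3 : (u y - m) / R * dist y x₀ ≤ (u y - m) / R * (R / 2) :=
          mul_le_mul_of_nonneg_left hyd.le (div_nonneg hym hR.le)
        have h4 : (u y - m) / R * (R / 2) = (u y - m) / 2 := by field_simp
        linarith
      have h5 : (u y - m) / R * dist y x₀ ≤ 2 * (u x₀ - m) / R * dist y x₀ :=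
        mul_le_mul_of_nonneg_right ((div_le_div_iff_of_pos_right hR).2 h2) dist_nonneg
      rw [dist_comm x₀ y]
      linarith
    · intro y hy
      have h1 := key x₀ hx₀ R hR (fun z hz => hRΩ (by
        rw [mem_closedBall] at hz ⊢; linarith)) y
        (ball_subset_ball (by linarith) hy)
      have h3 : (u x₀ - m) / R * dist x₀ y ≤ 2 * (u x₀ - m) / R * dist x₀ y :=
        mul_le_mul_of_nonneg_right ((div_le_div_iff_of_pos_right hR).2 (by linarith))
          dist_nonneg
      linarith
  -- quotient functions
  set G : X → ℝ := fun y => max (u x₀ - u y) 0 / dist x₀ y with hGdef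
  set F : X → ℝ := fun y => |u y - u x₀| / dist x₀ y with hFdef
  have hGF : ∀ y, G y ≤ F y := by
    intro y
    have h1 : max (u x₀ - u y) 0 ≤ |u y - u x₀| :=
      max_le (by rw [abs_sub_comm]; exact le_abs_self _) (abs_nonneg _)
    rcases (dist_nonneg : (0:ℝ) ≤ dist x₀ y).eq_or_lt with h | h
    · simp [hGdef, hFdef, ← h]
    · exact (div_le_div_iff_of_pos_right h).2 h1
  have hG0 : ∀ y, 0 ≤ G y := fun y => div_nonneg (le_max_right _ _) dist_nonneg
  have hFK : ∀ᶠ y in 𝓝[≠] x₀, F y ≤ K := by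
    filter_upwards [mem_nhdsWithin_of_mem_nhds (ball_mem_nhds x₀ (by positivity : (0:ℝ) < R/2)),
      self_mem_nhdsWithin] with y hy hne
    have hne' : y ≠ x₀ := hne
    have hd : 0 < dist x₀ y := dist_pos.2 (Ne.symm hne')
    rw [hFdef]
    rw [div_le_iff₀ hd]
    exact abs_sub_le_iff.2 ⟨hup y hy, hdown y hy⟩
  have hbF : IsBoundedUnder (· ≤ ·) (𝓝[≠] x₀) F := ⟨K, eventually_map.2 hFK⟩
  have hbG : IsBoundedUnder (· ≤ ·) (𝓝[≠] x₀) G :=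
    ⟨K, eventually_map.2 (hFK.mono fun y h => (hGF y).trans h)⟩
  have hcoF : IsCoboundedUnder (· ≤ ·) (𝓝[≠] x₀) F :=
    isCoboundedUnder_le_of_le _ fun y => div_nonneg (abs_nonneg _) dist_nonneg
  have hcoG : IsCoboundedUnder (· ≤ ·) (𝓝[≠] x₀) G :=
    isCoboundedUnder_le_of_le _ hG0
  have hsub_le : mSubslope u x₀ ≤ mSlope u x₀ :=
    limsup_le_limsup (Eventually.of_forall hGF) hcoG hbF
  obtain ⟨L, hLdef⟩ : ∃ L : ℝ, L = mSubslope u x₀ := ⟨_, rfl⟩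
  have hLG : L = limsup G (𝓝[≠] x₀) := hLdef
  have hL0 : 0 ≤ L := by
    rw [hLG]
    exact le_limsup_of_frequently_le ((Eventually.of_forall hG0).frequently) hbG
  -- main estimate
  have main : ∀ ε : ℝ, 0 < ε → mSlope u x₀ ≤ L + ε := by
    intro ε hε
    have h4 : limsup G (𝓝[≠] x₀) < L + ε / 4 := by rw [← hLG]; linarith
    have hev := eventually_lt_of_limsup_lt h4 hbG
    rw [eventually_nhdsWithin_iff, Metric.eventually_nhds_iff] at hev
    obtain ⟨s₀, hs₀, hsp⟩ := hev
    obtain ⟨s, hs, hss₀, hsR⟩ : ∃ s : ℝ, 0 < s ∧ s ≤ s₀ ∧ s ≤ R / 2 :=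
      ⟨min s₀ (R / 2), lt_min hs₀ (by positivity), min_le_left _ _, min_le_right _ _⟩
    obtain ⟨P, hPdef⟩ : ∃ P : ℝ, P = L + ε / 4 := ⟨_, rfl⟩
    have hP0 : 0 ≤ P := by rw [hPdef]; linarith
    have hPz : ∀ z : X, dist x₀ z < s → u x₀ - u z ≤ P * dist x₀ z := by
      intro z hz
      rcases eq_or_ne z x₀ with rfl | hne
      · simp
      · have hGz : G z < L + ε / 4 := hsp (show dist z x₀ < s₀ by
          rw [dist_comm]; exact hz.trans_le hss₀) hne
        have hd : 0 < dist x₀ z := dist_pos.2 (Ne.symm hne)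
        rw [hGdef] at hGz
        simp only at hGz
        have h5 := (div_lt_iff₀ hd).1 hGz
        have h6 : u x₀ - u z ≤ max (u x₀ - u z) 0 := le_max_left _ _
        rw [hPdef]
        have h7 : (L + ε / 4) * dist x₀ z = (L + ε / 4) * dist x₀ z := rfl
        nlinarith [h5, h6]
    obtain ⟨r, hrdef⟩ : ∃ r : ℝ, r = s / 2 := ⟨_, rfl⟩
    have hr : 0 < r := by rw [hrdef]; positivity
    obtain ⟨δ, hδ, hδr, hδle⟩ : ∃ δ : ℝ, 0 < δ ∧ δ ≤ r / 2 ∧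
        δ ≤ ε * r / (4 * (K + P + 1)) :=
      ⟨min (r / 2) (ε * r / (4 * (K + P + 1))),
        lt_min (by positivity) (by positivity), min_le_left _ _, min_le_right _ _⟩
    -- upper estimate near x₀
    have hQ : ∀ y : X, dist x₀ y < δ → y ≠ x₀ →
        u y - u x₀ ≤ ((K * dist x₀ y + P * (dist x₀ y + r)) / r) * dist x₀ y := by
      intro y hy hne
      have hrR : r ≤ R / 4 := by rw [hrdef]; linarith
      have hyR : y ∈ ball x₀ (R / 2) := by
        rw [mem_ball, dist_comm]
        linarith
      have hyΩ : y ∈ Ω := hRΩ (by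
        rw [mem_closedBall, dist_comm]
        linarith)
      have hd0 : (0:ℝ) ≤ dist x₀ y := dist_nonneg
      have hM0 : 0 ≤ (K * dist x₀ y + P * (dist x₀ y + r)) / r := by positivity
      have hsub : closedBall y r ⊆ Ω := by
        intro z hz
        apply hRΩ
        rw [mem_closedBall] at hz ⊢
        have h6 := dist_triangle z y x₀
        have h7 : dist y x₀ = dist x₀ y := dist_comm _ _
        linarith
      have hsph : ∀ z ∈ sphere y r, u y - u z ≤
          ((K * dist x₀ y + P * (dist x₀ y + r)) / r) * r := by
        intro z hz
        rw [mem_sphere] at hz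
        have h1 : u y - u x₀ ≤ K * dist x₀ y := hup y hyR
        have h2 : dist x₀ z < s := by
          have h6 := dist_triangle x₀ y z
          have h7 : dist y z = r := by rw [dist_comm]; exact hz
          linarith
        have h3 := hPz z h2
        have h8 : ((K * dist x₀ y + P * (dist x₀ y + r)) / r) * r
            = K * dist x₀ y + P * (dist x₀ y + r) := div_mul_cancel₀ _ hr.ne'
        have h9 : dist x₀ z ≤ dist x₀ y + r := by
          have h6 := dist_triangle x₀ y z
          have h7 : dist y z = r := by rw [dist_comm]; exact hz
          linarith
        have h10 : P * dist x₀ z ≤ P * (dist x₀ y + r) :=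
          mul_le_mul_of_nonneg_left h9 hP0
        linarith
      have happ := coneA hcc hyΩ hr hM0 hsub hsph x₀ (by
        rw [mem_ball]; linarith)
      rw [dist_comm y x₀] at happ
      linarith
    -- eventual bound on F
    have hev2 : ∀ᶠ y in 𝓝[≠] x₀, F y ≤ L + ε := by
      filter_upwards [mem_nhdsWithin_of_mem_nhds (ball_mem_nhds x₀ hδ),
        self_mem_nhdsWithin] with y hy hne
      have hne' : y ≠ x₀ := hne
      have hd : 0 < dist x₀ y := dist_pos.2 (Ne.symm hne')
      have hyd : dist x₀ y < δ := by rw [dist_comm]; exact mem_ball.1 hy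
      have h1 := hQ y hyd hne'
      have h2 := hPz y (by rw [hrdef] at hδr; linarith)
      rw [hFdef]
      rw [div_le_iff₀ hd]
      refine abs_sub_le_iff.2 ⟨?_, ?_⟩
      · -- u y - u x₀ ≤ (L + ε) * dist x₀ y
        refine h1.trans (mul_le_mul_of_nonneg_right ?_ hd.le)
        rw [div_le_iff₀ hr]
        have hdle : dist x₀ y ≤ ε * r / (4 * (K + P + 1)) := hyd.le.trans hδle
        have hKP : (0:ℝ) ≤ K + P := by linarith
        have h5 : (K + P) * dist x₀ y ≤ (K + P) * (ε * r / (4 * (K + P + 1))) :=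
          mul_le_mul_of_nonneg_left hdle hKP
        have h6 : (K + P) * (ε * r / (4 * (K + P + 1))) ≤ ε * r / 4 := by
          rw [mul_div_assoc']
          rw [div_le_div_iff₀ (by positivity) (by norm_num)]
          nlinarith [mul_nonneg hε.le hr.le]
        rw [hPdef] at h5 h6 ⊢
        nlinarith [mul_nonneg hε.le hr.le]
      · -- u x₀ - u y ≤ (L + ε) * dist x₀ y
        refine h2.trans (mul_le_mul_of_nonneg_right ?_ hd.le)
        rw [hPdef]; linarith
    have hfin : limsup F (𝓝[≠] x₀) ≤ L + ε := limsup_le_of_le hcoF hev2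
    exact hfin
  rw [hLdef] at main
  exact le_antisymm (le_of_forall_pos_le_add main) hsub_le
end

section
/- Let (X,d) be a proper geodesic metric space, Ω ⊆ X an open connected set, and u : Ω → ℝ lower semicontinuous, nonnegative, satisfying comparison with cones from below in Ω. If sup_Ω u > 0, then u(x) > 0 for every x ∈ Ω. -/
open Metric Filter Set Topology

/-- Key Harnack-type lemma from comparison with cones. -/
lemma compCones_half {X : Type*} [MetricSpace X] [ProperSpace X]
    {Ω : Set X} {u : X → ℝ} (hnn : ∀ x ∈ Ω, 0 ≤ u x) (hcc : CompCones Ω u)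
    {z : X} (hz : z ∈ Ω) {r : ℝ} (hr : 0 < r) (hball : Metric.closedBall z r ⊆ Ω)
    {y : X} (hy : dist z y < r / 2) : u z / 2 ≤ u y := by
  rcases eq_or_ne y z with rfl | hyz
  · linarith [hnn y hz]
  set O : Set X := Metric.ball z r ∩ {z}ᶜ with hO
  have hOopen : IsOpen O := Metric.isOpen_ball.inter isClosed_singleton.isOpen_compl
  have hOsub : closure O ⊆ Metric.closedBall z r :=
    closure_minimal (fun x hx => Metric.ball_subset_closedBall hx.1)
      Metric.isClosed_closedBall
  have hOΩ : closure O ⊆ Ω := hOsub.trans hball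
  have hOcpt : IsCompact (closure O) :=
    (isCompact_closedBall z r).of_isClosed_subset isClosed_closure hOsub
  have hcone := hcc O hOopen hOcpt hOΩ z ⟨hz, fun h => h.2 rfl⟩ (u z) (-(u z) / r)
    (by
      have h0 : 0 ≤ u z := hnn z hz
      have : 0 ≤ u z / r := div_nonneg h0 hr.le
      rw [neg_div]; linarith)
  have hfr : ∀ w ∈ frontier O, u z + -(u z) / r * dist z w ≤ u w := by
    intro w hw
    have hw' : w ∈ (frontier (Metric.ball z r) ∩ closure {z}ᶜ) ∪
        (closure (Metric.ball z r) ∩ frontier {z}ᶜ) := frontier_inter_subset _ _ hw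
    rcases hw' with ⟨h1, _⟩ | ⟨_, h2⟩
    · have hsph : w ∈ Metric.sphere z r := Metric.frontier_ball_subset_sphere h1
      have hdist : dist z w = r := by rw [dist_comm]; exact hsph
      have hwΩ : w ∈ Ω := hball (Metric.sphere_subset_closedBall hsph)
      have h0 := hnn w hwΩ
      rw [hdist]
      have heq : -(u z) / r * r = -(u z) := div_mul_cancel₀ _ hr.ne'
      rw [heq]; linarith
    · rw [frontier_compl] at h2
      have : w = z := isClosed_singleton.frontier_subset h2
      subst this
      simp
  have hyO : y ∈ closure O := subset_closure ⟨by
      rw [Metric.mem_ball, dist_comm]; linarith, hyz⟩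
  have h := hcone hfr y hyO
  have hz0 : 0 ≤ u z := hnn z hz
  have hd0 : 0 ≤ dist z y := dist_nonneg
  have hk : -(u z) / r * dist z y ≥ -(u z) / r * (r / 2) := by
    apply mul_le_mul_of_nonpos_left hy.le
    exact div_nonpos_of_nonpos_of_nonneg (neg_nonpos.mpr hz0) hr.le
  have heq2 : -(u z) / r * (r / 2) = -(u z) / 2 := by field_simp
  rw [heq2] at hk
  linarith [h, hk]

theorem stmt4 {X : Type*} [MetricSpace X] [ProperSpace X] (hgeo : IsGeodesicSpace X)
    (Ω : Set X) (hΩo : IsOpen Ω) (hΩconn : IsConnected Ω)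
    (u : X → ℝ) (hlsc : LowerSemicontinuousOn u Ω) (hnn : ∀ x ∈ Ω, 0 ≤ u x)
    (hcc : CompCones Ω u) (hpos : ∃ x ∈ Ω, 0 < u x) :
    ∀ x ∈ Ω, 0 < u x := by
  classical
  -- S : relatively open positivity set (open in X since Ω is open)
  set S : Set X := {x | x ∈ Ω ∧ 0 < u x} with hS
  set T : Set X := {x | x ∈ Ω ∧ u x = 0} with hT
  have hSopen : IsOpen S := by
    rw [isOpen_iff_mem_nhds]
    rintro x ⟨hxΩ, hxpos⟩
    have h1 : ∀ᶠ y in 𝓝[Ω] x, 0 < u y := hlsc x hxΩ 0 hxpos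
    have hΩnhds : Ω ∈ 𝓝 x := hΩo.mem_nhds hxΩ
    rw [nhdsWithin_eq_nhds.2 hΩnhds] at h1
    filter_upwards [h1, hΩnhds] with y hy1 hy2
    exact ⟨hy2, hy1⟩
  have hTopen : IsOpen T := by
    rw [isOpen_iff_mem_nhds]
    rintro x ⟨hxΩ, hx0⟩
    obtain ⟨r, hr, hrball⟩ := nhds_basis_closedBall.mem_iff.mp (hΩo.mem_nhds hxΩ)
    have hball : Metric.ball x (r / 4) ∈ 𝓝 x := Metric.ball_mem_nhds x (by linarith)
    filter_upwards [hball] with y hy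
    have hyΩ : y ∈ Ω := hrball (Metric.ball_subset_closedBall (by
      exact Metric.ball_subset_ball (by linarith) hy))
    refine ⟨hyΩ, le_antisymm ?_ (hnn y hyΩ)⟩
    by_contra hypos
    push_neg at hypos
    -- apply the key lemma with center y, radius r/2, point x
    have hball2 : Metric.closedBall y (r / 2) ⊆ Ω := by
      intro w hw
      apply hrball
      have : dist w x ≤ dist w y + dist y x := dist_triangle w y x
      have hyx : dist y x < r / 4 := Metric.mem_ball.mp hy
      exact Metric.mem_closedBall.mpr (by
        have := Metric.mem_closedBall.mp hw; linarith)
    have hdxy : dist y x < (r / 2) / 2 := by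
      exact lt_of_lt_of_le (Metric.mem_ball.mp hy) (by linarith)
    have := compCones_half hnn hcc hyΩ (by linarith : (0:ℝ) < r / 2) hball2 hdxy
    rw [hx0] at this
    linarith
  -- connectedness
  intro x hxΩ
  by_contra hx
  push_neg at hx
  have hx0 : u x = 0 := le_antisymm hx (hnn x hxΩ)
  obtain ⟨x₀, hx₀Ω, hx₀pos⟩ := hpos
  have hsub : Ω ⊆ S ∪ T := by
    intro w hw
    rcases (hnn w hw).lt_or_eq with h | h
    · exact Or.inl ⟨hw, h⟩
    · exact Or.inr ⟨hw, h.symm⟩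
  have hne1 : (Ω ∩ S).Nonempty := ⟨x₀, hx₀Ω, hx₀Ω, hx₀pos⟩
  have hne2 : (Ω ∩ T).Nonempty := ⟨x, hxΩ, hxΩ, hx0⟩
  obtain ⟨w, _, ⟨_, hw1⟩, ⟨_, hw2⟩⟩ :=
    hΩconn.isPreconnected S T hSopen hTopen hsub hne1 hne2
  rw [hw2] at hw1
  exact lt_irrefl 0 hw1
end

section
/- Let (X,d) be a proper geodesic metric space, Ω ⊊ X a bounded domain, λ > 0, and g : ∂Ω → ℝ continuous. Define u(x) = min_{y ∈ ∂Ω} (g(y) + λ·d(x,y)). Then for every x ∈ Ω, the subslope of u at x equals λ: |∇⁻u|(x) = limsup_{y→x} max{u(x)−u(y),0}/d(x,y) = λ, and also the full slope |∇u|(x) = λ. -/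
open Metric Filter Set Topology

theorem stmt6 {X : Type*} [MetricSpace X] [ProperSpace X] (hgeo : IsGeodesicSpace X)
    (Ω : Set X) (hΩo : IsOpen Ω) (hΩc : IsConnected Ω) (hΩb : Bornology.IsBounded Ω)
    (hΩne : Ω ≠ Set.univ)
    (l : ℝ) (hl : 0 < l) (g : X → ℝ) (hg : ContinuousOn g (frontier Ω))
    (u : X → ℝ)
    (hu : ∀ x, u x = sInf ((fun y => g y + l * dist x y) '' frontier Ω)) :
    ∀ x ∈ Ω, mSubslope u x = l ∧ mSlope u x = l := by
  -- the space is preconnected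
  have hX : PreconnectedSpace X := by
    constructor
    apply isPreconnected_of_forall_pair
    intro a _ b _
    obtain ⟨γ, h0, h1, hiso⟩ := hgeo a b
    have hlip : LipschitzWith 1 γ := by
      apply LipschitzWith.of_dist_le_mul
      intro s t
      rw [hiso, Real.dist_eq]
      simp
    exact ⟨γ '' Icc 0 (dist a b), subset_univ _,
      ⟨0, ⟨le_refl 0, dist_nonneg⟩, h0⟩, ⟨dist a b, ⟨dist_nonneg, le_refl _⟩, h1⟩,
      isPreconnected_Icc.image γ hlip.continuous.continuousOn⟩
  -- the frontier is a nonempty compact set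
  have hFrc : IsCompact (frontier Ω) :=
    IsCompact.of_isClosed_subset hΩb.isCompact_closure isClosed_frontier frontier_subset_closure
  have hFrne : (frontier Ω).Nonempty := by
    by_contra h
    rw [Set.not_nonempty_iff_eq_empty, ← isClopen_iff_frontier_eq_empty] at h
    rcases isClopen_iff.mp h with h | h
    · exact hΩc.nonempty.ne_empty h
    · exact hΩne h
  -- u is l-Lipschitz
  have hbdd : ∀ p : X, BddBelow ((fun y => g y + l * dist p y) '' frontier Ω) := by
    intro p
    exact (hFrc.image_of_continuousOn (hg.add (continuousOn_const.mul
      (continuous_const.dist continuous_id).continuousOn))).bddBelow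
  have hune : ∀ p : X, ((fun y => g y + l * dist p y) '' frontier Ω).Nonempty :=
    fun p => hFrne.image _
  have hulip : ∀ p q : X, u p ≤ u q + l * dist p q := by
    intro p q
    rw [hu p, hu q]
    have h1 : ∀ b ∈ (fun y => g y + l * dist q y) '' frontier Ω,
        sInf ((fun y => g y + l * dist p y) '' frontier Ω) - l * dist p q ≤ b := by
      rintro b ⟨y, hy, rfl⟩
      have h2 : sInf ((fun y => g y + l * dist p y) '' frontier Ω) ≤ g y + l * dist p y :=
        csInf_le (hbdd p) ⟨y, hy, rfl⟩
      have h3 : dist p y ≤ dist p q + dist q y := dist_triangle p q y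
      show sInf ((fun y => g y + l * dist p y) '' frontier Ω) - l * dist p q ≤ g y + l * dist q y
      nlinarith [hl.le]
    linarith [le_csInf (hune q) h1]
  have habs : ∀ p q : X, |u p - u q| ≤ l * dist p q := by
    intro p q
    rw [abs_le]
    constructor
    · have := hulip q p; rw [dist_comm q p] at this; linarith
    · linarith [hulip p q]
  intro x hx
  -- the minimizer
  obtain ⟨y₀, hy₀, hmin⟩ := hFrc.exists_isMinOn hFrne
    (hg.add (continuousOn_const.mul (continuous_const.dist continuous_id).continuousOn)
      : ContinuousOn (fun y => g y + l * dist x y) (frontier Ω))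
  have hux : u x = g y₀ + l * dist x y₀ := by
    rw [hu x]
    exact IsLeast.csInf_eq ⟨⟨y₀, hy₀, rfl⟩, by rintro b ⟨y, hy, rfl⟩; exact hmin hy⟩
  have hxy₀ : x ≠ y₀ := by
    intro h
    have : y₀ ∉ Ω := by
      have := hy₀
      rw [hΩo.frontier_eq] at this
      exact fun hmem => this.2 hmem
    exact this (h ▸ hx)
  set D := dist x y₀ with hD
  have hDpos : 0 < D := dist_pos.mpr hxy₀
  obtain ⟨γ, h0, h1, hiso⟩ := hgeo x y₀
  -- the key frequently statement
  have hfreq : ∃ᶠ z in 𝓝[≠] x, l ≤ max (u x - u z) 0 / dist x z ∧ l ≤ |u z - u x| / dist x z := by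
    rw [Filter.frequently_iff]
    intro U hU
    rw [Metric.mem_nhdsWithin_iff] at hU
    obtain ⟨ε, hε, hball⟩ := hU
    set t := min (ε / 2) (D / 2) with ht
    have htpos : 0 < t := lt_min (by linarith) (by linarith)
    have htD : t ≤ D := le_trans (min_le_right _ _) (by linarith)
    have hdxz : dist x (γ t) = t := by
      rw [← h0, hiso]
      simp [abs_of_nonneg htpos.le]
    have hzx : γ t ≠ x := by
      intro h
      rw [h, dist_self] at hdxz
      linarith
    have hmem : γ t ∈ U := by
      apply hball
      refine ⟨?_, hzx⟩
      rw [mem_ball, dist_comm, hdxz]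
      calc t ≤ ε / 2 := min_le_left _ _
        _ < ε := by linarith
    have hdzy : dist (γ t) y₀ = D - t := by
      rw [← h1, hiso]
      rw [abs_of_nonpos (by linarith)]
      ring
    have huz : u (γ t) ≤ g y₀ + l * (D - t) := by
      rw [hu (γ t)]
      have := csInf_le (hbdd (γ t)) (⟨y₀, hy₀, rfl⟩ :
        g y₀ + l * dist (γ t) y₀ ∈ (fun y => g y + l * dist (γ t) y) '' frontier Ω)
      rwa [hdzy] at this
    have hgap : l * t ≤ u x - u (γ t) := by
      rw [hux]
      nlinarith
    refine ⟨γ t, hmem, ?_, ?_⟩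
    · rw [hdxz, le_div_iff₀ htpos]
      calc l * t ≤ u x - u (γ t) := hgap
        _ ≤ max (u x - u (γ t)) 0 := le_max_left _ _
    · rw [hdxz, le_div_iff₀ htpos]
      calc l * t ≤ u x - u (γ t) := hgap
        _ ≤ |u (γ t) - u x| := by rw [abs_sub_comm]; exact le_abs_self _
  have hne : (𝓝[≠] x).NeBot := by
    rw [Filter.neBot_iff]
    intro h
    rw [h] at hfreq
    simp at hfreq
  -- upper bounds, everywhere on the punctured neighborhood
  have hev : ∀ᶠ z in 𝓝[≠] x,
      max (u x - u z) 0 / dist x z ≤ l ∧ |u z - u x| / dist x z ≤ l := by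
    filter_upwards [eventually_mem_nhdsWithin] with z hz
    have hd : 0 < dist x z := dist_pos.mpr (fun h => hz (h.symm ▸ rfl))
    have h1 : |u z - u x| ≤ l * dist x z := by
      have := habs z x
      rwa [dist_comm z x] at this
    have h2 : max (u x - u z) 0 ≤ l * dist x z := by
      apply max_le _ (by positivity)
      calc u x - u z ≤ |u x - u z| := le_abs_self _
        _ = |u z - u x| := abs_sub_comm _ _
        _ ≤ l * dist x z := h1
    exact ⟨(div_le_iff₀ hd).mpr (by linarith), (div_le_iff₀ hd).mpr (by linarith)⟩
  have hnn₁ : ∀ᶠ z in 𝓝[≠] x, (0:ℝ) ≤ max (u x - u z) 0 / dist x z :=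
    Filter.Eventually.of_forall (fun z => div_nonneg (le_max_right _ _) dist_nonneg)
  have hnn₂ : ∀ᶠ z in 𝓝[≠] x, (0:ℝ) ≤ |u z - u x| / dist x z :=
    Filter.Eventually.of_forall (fun z => div_nonneg (abs_nonneg _) dist_nonneg)
  constructor
  · apply le_antisymm
    · exact Filter.limsup_le_of_le (Filter.IsBoundedUnder.isCoboundedUnder_le ⟨0, hnn₁⟩)
        (hev.mono (fun z hz => hz.1))
    · exact Filter.le_limsup_of_frequently_le (hfreq.mono (fun z hz => hz.1))
        ⟨l, hev.mono (fun z hz => hz.1)⟩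
  · apply le_antisymm
    · exact Filter.limsup_le_of_le (Filter.IsBoundedUnder.isCoboundedUnder_le ⟨0, hnn₂⟩)
        (hev.mono (fun z hz => hz.2))
    · exact Filter.le_limsup_of_frequently_le (hfreq.mono (fun z hz => hz.2))
        ⟨l, hev.mono (fun z hz => hz.2)⟩
end

section
/- Let (X,d) be a proper geodesic metric space, Ω ⊊ X a bounded domain, λ > 0, and g : ∂Ω → ℝ continuous. The McShane–Whitney extension u(x) = min_{y ∈ ∂Ω} (g(y) + λ·d(x,y)) satisfies comparison with cones from below in Ω: for every open O compactly contained in Ω, apex x̂ ∈ Ω \ O, a ∈ ℝ, κ ≤ 0, if u ≥ a + κ·d(x̂,·) on ∂O then u ≥ a + κ·d(x̂,·) on the closure of O. -/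
open Metric Filter Set Topology

/-- A geodesic from an interior point of `O` to a point outside `O` crosses `frontier O`
at a point realizing additivity of distances. -/
lemma crossing {X : Type*} [MetricSpace X] (hgeo : IsGeodesicSpace X)
    {O : Set X} (hO : IsOpen O) {z q : X} (hz : z ∈ O) (hq : q ∉ O) :
    ∃ p ∈ frontier O, dist z q = dist z p + dist p q := by
  obtain ⟨γ, hγ0, hγT, hγd⟩ := hgeo z q
  have hcont : Continuous γ := by
    have : LipschitzWith 1 γ := LipschitzWith.of_dist_le_mul (fun s t => by
      rw [hγd, NNReal.coe_one, one_mul, Real.dist_eq])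
    exact this.continuous
  set T := dist z q with hT
  set S : Set ℝ := Set.Icc 0 T ∩ γ ⁻¹' Oᶜ with hS
  have hSne : S.Nonempty := ⟨T, ⟨dist_nonneg, le_refl T⟩, by simpa [hγT] using hq⟩
  have hScl : IsClosed S := isClosed_Icc.inter (hO.isClosed_compl.preimage hcont)
  have hSbdd : BddBelow S := ⟨0, fun t ht => ht.1.1⟩
  set t₀ := sInf S with ht₀
  have ht₀S : t₀ ∈ S := hScl.csInf_mem hSne hSbdd
  have ht₀nO : γ t₀ ∉ O := ht₀S.2
  have ht₀pos : 0 < t₀ := by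
    rcases ht₀S.1.1.lt_or_eq with h | h
    · exact h
    · exact absurd (by rwa [← h, hγ0] at ht₀nO) (not_not_intro hz)
  have hmemO : ∀ t, 0 < t → t < t₀ → γ t ∈ O := by
    intro t h1 h2
    by_contra h
    exact absurd (csInf_le hSbdd ⟨⟨h1.le, h2.le.trans ht₀S.1.2⟩, h⟩) (not_le.2 h2)
  have hpcl : γ t₀ ∈ closure O := by
    have htend : Tendsto γ (𝓝[<] t₀) (𝓝 (γ t₀)) :=
      (hcont.tendsto t₀).mono_left nhdsWithin_le_nhds
    have hev : ∀ᶠ t in 𝓝[<] t₀, γ t ∈ O := by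
      filter_upwards [Ioo_mem_nhdsLT_of_mem ⟨ht₀pos, le_refl t₀⟩] with t ht
      exact hmemO t ht.1 ht.2
    exact mem_closure_of_tendsto htend hev
  refine ⟨γ t₀, by rw [hO.frontier_eq]; exact ⟨hpcl, ht₀nO⟩, ?_⟩
  have h1 : dist z (γ t₀) = t₀ := by
    rw [← hγ0, hγd]
    simp [abs_of_nonpos, ht₀pos.le]
  have h2 : dist (γ t₀) q = T - t₀ := by
    rw [← hγT, hγd, abs_of_nonpos (by linarith [ht₀S.1.2]), neg_sub]
  rw [h1, h2]; ring

theorem stmt8 {X : Type*} [MetricSpace X] [ProperSpace X] (hgeo : IsGeodesicSpace X)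
    (Ω : Set X) (hΩo : IsOpen Ω) (hΩc : IsConnected Ω) (hΩb : Bornology.IsBounded Ω)
    (hΩne : Ω ≠ Set.univ)
    (l : ℝ) (hl : 0 < l) (g : X → ℝ) (hg : ContinuousOn g (frontier Ω))
    (u : X → ℝ)
    (hu : ∀ x, u x = sInf ((fun y => g y + l * dist x y) '' frontier Ω)) :
    CompCones Ω u := by
  intro O hOo hOc hOsub xhat hxhat a κ hκ hbd z hzcl
  -- the frontier of Ω is nonempty and compact
  obtain ⟨x₀, hx₀⟩ := hΩc.nonempty
  obtain ⟨q₀, hq₀⟩ := (Set.ne_univ_iff_exists_notMem Ω).mp hΩne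
  obtain ⟨y₀, hy₀, -⟩ := crossing hgeo hΩo hx₀ hq₀
  have hFne : (frontier Ω).Nonempty := ⟨y₀, hy₀⟩
  have hFcomp : IsCompact (frontier Ω) :=
    Metric.isCompact_of_isClosed_isBounded isClosed_frontier
      (hΩb.closure.subset frontier_subset_closure)
  have hcont : ∀ x : X, ContinuousOn (fun y => g y + l * dist x y) (frontier Ω) := by
    intro x
    exact hg.add (continuousOn_const.mul (Continuous.continuousOn (by fun_prop)))
  have hbdd : ∀ x : X, BddBelow ((fun y => g y + l * dist x y) '' frontier Ω) :=
    fun x => hFcomp.bddBelow_image (hcont x)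
  have hle : ∀ x : X, ∀ y ∈ frontier Ω, u x ≤ g y + l * dist x y := by
    intro x y hy
    rw [hu x]
    exact csInf_le (hbdd x) (Set.mem_image_of_mem _ hy)
  have hmin : ∀ x : X, ∃ y ∈ frontier Ω, u x = g y + l * dist x y := by
    intro x
    obtain ⟨y, hy, hymin⟩ := hFcomp.exists_isMinOn hFne (hcont x)
    refine ⟨y, hy, le_antisymm (hle x y hy) ?_⟩
    rw [hu x]
    refine le_csInf (hFne.image _) ?_
    rintro b ⟨y', hy', rfl⟩
    exact hymin hy'
  have hlip : ∀ x x' : X, u x ≤ u x' + l * dist x x' := by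
    intro x x'
    obtain ⟨y, hy, hxy⟩ := hmin x'
    have h1 := hle x y hy
    have h2 : dist x y ≤ dist x x' + dist x' y := dist_triangle x x' y
    nlinarith [hl.le]
  by_cases hzO : z ∈ O
  · by_cases hcase : -l ≤ κ
    · -- shallow cone: follow the geodesic from z to a minimizer on ∂Ω
      obtain ⟨y, hy, hzy⟩ := hmin z
      have hyO : y ∉ O := fun h => (hΩo.frontier_eq ▸ hy).2 (hOsub (subset_closure h))
      obtain ⟨p, hp, hdist⟩ := crossing hgeo hOo hzO hyO
      have h1 := hle p y hy
      have h2 := hbd p hp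
      have h3 : dist xhat p ≤ dist xhat z + dist z p := dist_triangle _ _ _
      nlinarith [dist_nonneg (x := z) (y := p),
        mul_le_mul_of_nonpos_left h3 hκ,
        mul_nonneg (by linarith : (0:ℝ) ≤ l + κ) (dist_nonneg (x := z) (y := p))]
    · -- steep cone: follow the geodesic from z to the apex
      obtain ⟨p, hp, hdist⟩ := crossing hgeo hOo hzO hxhat.2
      have h1 := hbd p hp
      have h2 := hlip p z
      have c1 : dist xhat z = dist z xhat := dist_comm _ _
      have c2 : dist xhat p = dist p xhat := dist_comm _ _
      have c3 : dist p z = dist z p := dist_comm _ _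
      have hκl : κ + l ≤ 0 := by linarith [lt_of_not_ge hcase]
      nlinarith [mul_nonneg (by linarith : (0:ℝ) ≤ -(κ + l)) (dist_nonneg (x := z) (y := p))]
  · have hzf : z ∈ frontier O := by rw [hOo.frontier_eq]; exact ⟨hzcl, hzO⟩
    exact hbd z hzf
end

section
/- Let (X,d) be a proper geodesic metric space and Ω ⊊ X a bounded domain. For λ ≥ 0, the function u(x) = λ·d(x, ∂Ω) satisfies comparison with cones from below in Ω (it is ∞-superharmonic), and its subslope satisfies |∇⁻u|(x) = λ at every x ∈ Ω. -/
open Metric Filter Set Topology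

lemma crossing_s9 {X : Type*} [MetricSpace X] {O : Set X} {γ : ℝ → X}
    (hγ : ∀ s t : ℝ, dist (γ s) (γ t) = |s - t|) {T : ℝ} (hT : 0 ≤ T)
    (h0 : γ 0 ∈ closure O) (h1 : γ T ∉ O) : ∃ t ∈ Set.Icc 0 T, γ t ∈ frontier O := by
  have hcont : Continuous γ := by
    apply LipschitzWith.continuous (K := 1)
    intro s t
    rw [edist_dist, hγ s t, edist_dist, Real.dist_eq]
    simp
  have hpre : IsPreconnected (Set.Icc (0:ℝ) T) := isPreconnected_Icc
  obtain ⟨r, hr, hr1, hr2⟩ := isPreconnected_closed_iff.mp hpre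
    (γ ⁻¹' closure O) (γ ⁻¹' (interior O)ᶜ)
    (isClosed_closure.preimage hcont)
    ((isOpen_interior.isClosed_compl).preimage hcont)
    (by
      intro s _
      by_cases h : γ s ∈ closure O
      · exact Or.inl h
      · exact Or.inr fun hint => h (subset_closure (interior_subset hint)))
    ⟨0, Set.left_mem_Icc.mpr hT, h0⟩
    ⟨T, Set.right_mem_Icc.mpr hT, fun hint => h1 (interior_subset hint)⟩
  exact ⟨r, hr, hr1, hr2⟩

theorem stmt9 {X : Type*} [MetricSpace X] [ProperSpace X] (hgeo : IsGeodesicSpace X)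
    (Ω : Set X) (hΩo : IsOpen Ω) (hΩc : IsConnected Ω) (hΩb : Bornology.IsBounded Ω)
    (hΩne : Ω ≠ Set.univ)
    (l : ℝ) (hl : 0 ≤ l)
    (u : X → ℝ) (hu : ∀ x, u x = l * Metric.infDist x (frontier Ω)) :
    CompCones Ω u ∧ ∀ x ∈ Ω, mSubslope u x = l := by
  set F := frontier Ω with hF
  have hFc : IsClosed F := isClosed_frontier
  have hFne : F.Nonempty := by
    obtain ⟨x0, hx0⟩ := hΩc.nonempty
    obtain ⟨p, hp⟩ : ∃ p, p ∉ Ω := by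
      by_contra h
      push_neg at h
      exact hΩne (Set.eq_univ_of_forall h)
    obtain ⟨γ, hγ0, hγ1, hγd⟩ := hgeo x0 p
    obtain ⟨t, _, ht⟩ := crossing_s9 hγd dist_nonneg (hγ0 ▸ subset_closure hx0) (hγ1 ▸ hp)
    exact ⟨γ t, ht⟩
  have hΩF : ∀ y ∈ F, y ∉ Ω := by
    intro y hy
    rw [hF, hΩo.frontier_eq] at hy
    exact hy.2
  have uLip : ∀ x y : X, u x ≤ u y + l * dist x y := by
    intro x y
    rw [hu x, hu y]
    have h := Metric.infDist_le_infDist_add_dist (x := x) (y := y) (s := F)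
    nlinarith [h, hl]
  constructor
  · intro O hOo hOcc hOsub xhat hxhat a κ hκ hbd z hz
    by_cases hzO : z ∈ O
    · by_cases hlκ : -l ≤ κ
      · -- follow geodesic to nearest boundary point
        obtain ⟨y, hyF, hyd⟩ := hFc.exists_infDist_eq_dist hFne z
        obtain ⟨γ, hγ0, hγ1, hγd⟩ := hgeo z y
        have hyO : y ∉ O := fun h => hΩF y hyF (hOsub (subset_closure h))
        obtain ⟨t, ⟨ht0, htT⟩, htf⟩ := crossing_s9 hγd dist_nonneg
          (hγ0 ▸ subset_closure hzO) (hγ1 ▸ hyO)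
        set z' := γ t with hz'
        have hd1 : dist z z' = t := by
          have h := hγd 0 t
          rw [hγ0] at h
          rw [hz', h, abs_sub_comm, sub_zero]
          exact abs_of_nonneg ht0
        have hd2 : dist z' y = dist z y - t := by
          have h := hγd t (dist z y)
          rw [hγ1] at h
          rw [hz', h, abs_of_nonpos (by linarith)]
          ring
        have hbz' := hbd z' htf
        have hle : Metric.infDist z' F ≤ dist z y - t := by
          rw [← hd2]; exact Metric.infDist_le_dist_of_mem hyF
        have hge : dist z y - t ≤ Metric.infDist z' F := by
          have h3 := Metric.infDist_le_infDist_add_dist (x := z) (y := z') (s := F)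
          rw [hd1, hyd] at h3
          linarith
        have huz' : u z' = l * (dist z y - t) := by rw [hu z', le_antisymm hle hge]
        have huz : u z = l * dist z y := by rw [hu z, hyd]
        rw [huz' ] at hbz'
        have hdx : dist xhat z' ≤ dist xhat z + t := by
          calc dist xhat z' ≤ dist xhat z + dist z z' := dist_triangle _ _ _
          _ = dist xhat z + t := by rw [hd1]
        have h4 := mul_le_mul_of_nonpos_left hdx hκ
        have h5 : 0 ≤ (l + κ) * t := mul_nonneg (by linarith) ht0
        rw [huz]
        nlinarith [hbz', h4, h5]
      · -- follow geodesic towards the apex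
        push_neg at hlκ
        obtain ⟨γ, hγ0, hγ1, hγd⟩ := hgeo z xhat
        obtain ⟨t, ⟨ht0, htT⟩, htf⟩ := crossing_s9 hγd dist_nonneg
          (hγ0 ▸ subset_closure hzO) (hγ1 ▸ hxhat.2)
        set z' := γ t with hz'
        have hd1 : dist z z' = t := by
          have h := hγd 0 t
          rw [hγ0] at h
          rw [hz', h, abs_sub_comm, sub_zero]
          exact abs_of_nonneg ht0
        have hd2 : dist z' xhat = dist z xhat - t := by
          have h := hγd t (dist z xhat)
          rw [hγ1] at h
          rw [hz', h, abs_of_nonpos (by linarith)]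
          ring
        have hbz' := hbd z' htf
        have hlip := uLip z' z
        rw [dist_comm z' z, hd1] at hlip
        rw [dist_comm xhat z', hd2] at hbz'
        rw [dist_comm xhat z]
        have h5 : 0 ≤ (-l - κ) * t := mul_nonneg (by linarith) ht0
        nlinarith [hbz', hlip, h5]
    · have hzfr : z ∈ frontier O := by
        rw [hOo.frontier_eq]; exact ⟨hz, hzO⟩
      exact hbd z hzfr
  · intro x hx
    have hrpos : 0 < Metric.infDist x F := by
      rw [← hFc.notMem_iff_infDist_pos hFne]
      exact fun h => hΩF x h hx
    set r := Metric.infDist x F with hr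
    obtain ⟨y, hyF, hyd⟩ := hFc.exists_infDist_eq_dist hFne x
    have hdxyr : dist x y = r := hyd.symm
    obtain ⟨γ, hγ0, hγ1, hγd⟩ := hgeo x y
    have hub : ∀ᶠ y' in 𝓝[≠] x, max (u x - u y') 0 / dist x y' ≤ l := by
      filter_upwards [self_mem_nhdsWithin] with y' hy'
      have hd : 0 < dist x y' :=
        dist_pos.mpr (Set.mem_compl_singleton_iff.mp hy' : y' ≠ x).symm
      rw [div_le_iff₀ hd]
      refine max_le ?_ (by positivity)
      linarith [uLip x y']
    have hfreq : ∃ᶠ y' in 𝓝[≠] x, l ≤ max (u x - u y') 0 / dist x y' := by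
      rw [Filter.frequently_iff]
      intro U hU
      rw [mem_nhdsWithin] at hU
      obtain ⟨V, hVo, hxV, hVU⟩ := hU
      obtain ⟨δ, hδ, hδball⟩ := Metric.isOpen_iff.mp hVo x hxV
      set t := min (δ / 2) r with htdef
      have ht0 : 0 < t := lt_min (by linarith) hrpos
      have htr : t ≤ r := min_le_right _ _
      set y' := γ t with hy'
      have hdxy' : dist x y' = t := by
        have h := hγd 0 t
        rw [hγ0] at h
        rw [hy', h, abs_sub_comm, sub_zero]
        exact abs_of_nonneg ht0.le
      have hy'ne : y' ≠ x := by
        intro h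
        rw [h, dist_self] at hdxy'
        exact ht0.ne' hdxy'.symm
      have hy'U : y' ∈ U := by
        apply hVU
        refine ⟨hδball ?_, hy'ne⟩
        rw [Metric.mem_ball, dist_comm, hdxy']
        exact lt_of_le_of_lt (min_le_left _ _) (by linarith)
      refine ⟨y', hy'U, ?_⟩
      have hd2 : dist y' y = r - t := by
        have h := hγd t (dist x y)
        rw [hγ1, hdxyr] at h
        rw [hy', h, abs_of_nonpos (by linarith)]
        ring
      have hle : Metric.infDist y' F ≤ r - t := by
        rw [← hd2]; exact Metric.infDist_le_dist_of_mem hyF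
      have hge : r - t ≤ Metric.infDist y' F := by
        have h3 := Metric.infDist_le_infDist_add_dist (x := x) (y := y') (s := F)
        rw [hdxy', ← hr] at h3
        linarith
      have huy' : u y' = l * (r - t) := by rw [hu y', le_antisymm hle hge]
      have hux : u x = l * r := by rw [hu x]
      rw [hux, huy', hdxy']
      have hmx : max (l * r - l * (r - t)) 0 = l * t := by
        rw [max_eq_left (by nlinarith)]; ring
      rw [hmx, mul_div_assoc, div_self ht0.ne', mul_one]
    have hbdd : Filter.IsBoundedUnder (· ≤ ·) (𝓝[≠] x)
        (fun y' => max (u x - u y') 0 / dist x y') := ⟨l, hub⟩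
    have hcob : Filter.IsCoboundedUnder (· ≤ ·) (𝓝[≠] x)
        (fun y' => max (u x - u y') 0 / dist x y') :=
      Filter.IsCoboundedUnder.of_frequently_ge hfreq
    exact le_antisymm (Filter.limsup_le_of_le hcob hub)
      (Filter.le_limsup_of_frequently_le hfreq hbdd)
end

section
/- Let (X,d) be a proper geodesic metric space and Ω ⊊ X a bounded domain. Set R_∞ = max_{x ∈ cl(Ω)} d(x, ∂Ω) and Λ_∞ = 1/R_∞. Then the function u_dist(x) = Λ_∞ · d(x, ∂Ω) satisfies: (i) comparison with cones from below in Ω, and (ii) |∇⁻u_dist|(x) ≥ Λ_∞ · u_dist(x) for all x ∈ Ω; i.e. u_dist is a supersolution of the ∞-eigenvalue problem min{|∇u| − Λ_∞ u, −Δ_∞ u} = 0. -/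
open Metric Filter Set Topology

/-- Exit time of a continuous curve from an open set: there is a time in `[0, D]` where the
curve is on the frontier. -/
lemma exit_time {X : Type*} [MetricSpace X] {O : Set X} (hO : IsOpen O)
    {γ : ℝ → X} (hγ : Continuous γ) {D : ℝ} (hD : 0 ≤ D)
    (h0 : γ 0 ∈ O) (h1 : γ D ∉ O) :
    ∃ t, 0 ≤ t ∧ t ≤ D ∧ γ t ∈ frontier O := by
  set S : Set ℝ := Icc 0 D ∩ γ ⁻¹' Oᶜ with hS
  have hScl : IsClosed S := isClosed_Icc.inter (hO.isClosed_compl.preimage hγ)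
  have hSne : S.Nonempty := ⟨D, ⟨hD, le_refl D⟩, h1⟩
  have hbd : BddBelow S := ⟨0, fun t ht => ht.1.1⟩
  have ht0 : sInf S ∈ S := hScl.csInf_mem hSne hbd
  set t0 := sInf S with ht0def
  have hpos : 0 < t0 := by
    rcases lt_or_eq_of_le ht0.1.1 with h | h
    · exact h
    · exact absurd h0 (by rw [h]; exact ht0.2)
  have hmemO : ∀ s ∈ Ico (0:ℝ) t0, γ s ∈ O := by
    intro s hs
    by_contra h
    exact absurd (csInf_le hbd ⟨⟨hs.1, hs.2.le.trans ht0.1.2⟩, h⟩) (not_le.2 hs.2)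
  have hcl : γ t0 ∈ closure O := by
    have htend : Tendsto γ (𝓝[<] t0) (𝓝 (γ t0)) :=
      (hγ.tendsto t0).mono_left nhdsWithin_le_nhds
    refine mem_closure_of_tendsto htend ?_
    filter_upwards [Ioo_mem_nhdsLT hpos] with s hs
    exact hmemO s ⟨hs.1.le, hs.2⟩
  exact ⟨t0, ht0.1.1, ht0.1.2, by rw [hO.frontier_eq]; exact ⟨hcl, ht0.2⟩⟩

theorem stmt10 {X : Type*} [MetricSpace X] [ProperSpace X] (hgeo : IsGeodesicSpace X)
    (Ω : Set X) (hΩo : IsOpen Ω) (hΩc : IsConnected Ω) (hΩb : Bornology.IsBounded Ω)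
    (hΩne : Ω ≠ Set.univ)
    (R Λ : ℝ)
    (hR : R = sSup ((fun x => Metric.infDist x (frontier Ω)) '' closure Ω))
    (hΛ : Λ = 1 / R)
    (u : X → ℝ) (hu : ∀ x, u x = Λ * Metric.infDist x (frontier Ω)) :
    CompCones Ω u ∧ ∀ x ∈ Ω, Λ * u x ≤ mSubslope u x := by
  set F := frontier Ω with hF
  have hFcl : IsClosed F := isClosed_frontier
  have hFΩ : ∀ {p : X}, p ∈ F → p ∉ Ω := by
    intro p hp
    rw [hF, hΩo.frontier_eq] at hp
    exact hp.2
  have hcont : ∀ (γ : ℝ → X), (∀ s t : ℝ, dist (γ s) (γ t) = |s - t|) → Continuous γ := by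
    intro γ h
    exact (Isometry.of_dist_eq (fun s t => by rw [h, Real.dist_eq])).continuous
  obtain ⟨x0, hx0⟩ := hΩc.nonempty
  obtain ⟨y0, hy0⟩ := (Set.ne_univ_iff_exists_notMem Ω).mp hΩne
  have hFne : F.Nonempty := by
    obtain ⟨γ, hγ0, hγ1, hiso⟩ := hgeo x0 y0
    obtain ⟨t, _, _, ht⟩ := exit_time hΩo (hcont γ hiso) dist_nonneg
      (by rw [hγ0]; exact hx0) (by rw [hγ1]; exact hy0)
    exact ⟨γ t, ht⟩
  have hbApos : ∀ x ∈ Ω, 0 < infDist x F := by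
    intro x hx
    exact (hFcl.notMem_iff_infDist_pos hFne).mp (fun h => hFΩ h hx)
  obtain ⟨C, hC⟩ : ∃ C, ∀ x ∈ closure Ω, dist x x0 ≤ C := by
    obtain ⟨C, hC⟩ := (Metric.isBounded_iff_subset_closedBall x0).mp hΩb.closure
    exact ⟨C, fun x hx => hC hx⟩
  have hbdd : BddAbove ((fun x => infDist x F) '' closure Ω) := by
    refine ⟨infDist x0 F + C, ?_⟩
    rintro _ ⟨x, hx, rfl⟩
    have h1 := Metric.infDist_le_infDist_add_dist (x := x) (y := x0) (s := F)
    have h2 := hC x hx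
    simp only
    linarith
  have hdleR : ∀ x ∈ closure Ω, infDist x F ≤ R := by
    intro x hx
    rw [hR]
    exact le_csSup hbdd ⟨x, hx, rfl⟩
  have hRpos : 0 < R := lt_of_lt_of_le (hbApos x0 hx0) (hdleR x0 (subset_closure hx0))
  have hΛpos : 0 < Λ := hΛ ▸ one_div_pos.mpr hRpos
  have hΛR : Λ * R = 1 := by rw [hΛ]; field_simp
  have hLip : ∀ x y : X, u x - u y ≤ Λ * dist x y := by
    intro x y
    rw [hu x, hu y]
    have h := Metric.infDist_le_infDist_add_dist (x := x) (y := y) (s := F)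
    have h2 : Λ * (infDist x F - infDist y F) ≤ Λ * dist x y :=
      mul_le_mul_of_nonneg_left (by linarith) hΛpos.le
    have h3 : Λ * (infDist x F - infDist y F)
        = Λ * infDist x F - Λ * infDist y F := by ring
    linarith
  constructor
  · intro O hOopen _ hOsub xhat hxhat a κ hκ hb z hz
    by_cases hzO : z ∈ O
    swap
    · exact hb z (by rw [hOopen.frontier_eq]; exact ⟨hz, hzO⟩)
    by_cases hc : Λ + κ ≤ 0
    · -- move toward the apex
      obtain ⟨γ, hγ0, hγ1, hiso⟩ := hgeo z xhat
      obtain ⟨t, ht0, htD, htf⟩ := exit_time hOopen (hcont γ hiso) dist_nonneg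
        (by rw [hγ0]; exact hzO) (by rw [hγ1]; exact hxhat.2)
      have hbw := hb (γ t) htf
      have hdw : dist xhat (γ t) = dist z xhat - t := by
        conv_lhs => rw [← hγ1]
        rw [hiso, abs_of_nonneg (by linarith)]
      have hzw : dist z (γ t) = t := by
        conv_lhs => rw [← hγ0]
        rw [hiso, abs_of_nonpos (by linarith)]
        ring
      have huw : u (γ t) ≤ u z + Λ * t := by
        have h := hLip (γ t) z
        rw [dist_comm (γ t) z, hzw] at h
        linarith
      have key : (Λ + κ) * t ≤ 0 := by
        have := mul_le_mul_of_nonneg_right hc ht0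
        linarith
      have e1 : κ * dist xhat (γ t) = κ * dist xhat z - κ * t := by
        rw [hdw, dist_comm xhat z]; ring
      have e2 : (Λ + κ) * t = Λ * t + κ * t := by ring
      linarith
    · push_neg at hc
      obtain ⟨p, hpF, hpd⟩ := hFcl.exists_infDist_eq_dist hFne z
      have hpO : p ∉ O := fun h => hFΩ hpF (hOsub (subset_closure h))
      obtain ⟨γ, hγ0, hγ1, hiso⟩ := hgeo z p
      obtain ⟨t, ht0, htD, htf⟩ := exit_time hOopen (hcont γ hiso) dist_nonneg
        (by rw [hγ0]; exact hzO) (by rw [hγ1]; exact hpO)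
      have hbw := hb (γ t) htf
      have hwp : dist (γ t) p = dist z p - t := by
        conv_lhs => rw [← hγ1]
        rw [hiso, abs_of_nonpos (by linarith)]
        ring
      have hzw : dist z (γ t) = t := by
        conv_lhs => rw [← hγ0]
        rw [hiso, abs_of_nonpos (by linarith)]
        ring
      have huw : u (γ t) ≤ Λ * (dist z p - t) := by
        rw [hu (γ t)]
        have h1 : infDist (γ t) F ≤ dist (γ t) p := infDist_le_dist_of_mem hpF
        have h2 : Λ * infDist (γ t) F ≤ Λ * dist (γ t) p :=
          mul_le_mul_of_nonneg_left h1 hΛpos.le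
        rw [hwp] at h2
        exact h2
      have hxd : dist xhat (γ t) ≤ dist xhat z + t := by
        have h := dist_triangle xhat z (γ t)
        rw [hzw] at h
        linarith
      have hκd : κ * (dist xhat z + t) ≤ κ * dist xhat (γ t) :=
        mul_le_mul_of_nonpos_left hxd hκ
      have huz : u z = Λ * dist z p := by rw [hu z, hpd]
      have key : 0 ≤ (Λ + κ) * t := mul_nonneg hc.le ht0
      have e2 : κ * (dist xhat z + t) = κ * dist xhat z + κ * t := by ring
      have e3 : (Λ + κ) * t = Λ * t + κ * t := by ring
      have e4 : Λ * (dist z p - t) = Λ * dist z p - Λ * t := by ring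
      linarith
  · intro x hx
    set d := infDist x F with hd
    have hdpos : 0 < d := hbApos x hx
    obtain ⟨p, hpF, hpd⟩ := hFcl.exists_infDist_eq_dist hFne x
    obtain ⟨γ, hγ0, hγ1, hiso⟩ := hgeo x p
    have hDd : dist x p = d := hpd.symm
    have hgx : ∀ t : ℝ, 0 ≤ t → dist x (γ t) = t := by
      intro t h0
      conv_lhs => rw [← hγ0]
      rw [hiso, abs_of_nonpos (by linarith)]
      ring
    have hval : ∀ t : ℝ, 0 ≤ t → t ≤ d → u x - u (γ t) = Λ * t := by
      intro t h0 h1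
      have h2 : infDist (γ t) F ≤ d - t := by
        have ha := infDist_le_dist_of_mem (x := γ t) hpF
        have hgp : dist (γ t) p = d - t := by
          conv_lhs => rw [← hγ1]
          rw [hiso, hDd, abs_of_nonpos (by linarith)]
          ring
        linarith
      have h3 : d - t ≤ infDist (γ t) F := by
        have ha := Metric.infDist_le_infDist_add_dist (x := x) (y := γ t) (s := F)
        rw [hgx t h0, ← hd] at ha
        linarith
      have heq : infDist (γ t) F = d - t := le_antisymm h2 h3
      rw [hu x, hu (γ t), heq, ← hd]
      ring
    have hub : ∀ y : X, max (u x - u y) 0 / dist x y ≤ Λ := by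
      intro y
      rcases eq_or_ne y x with rfl | hne
      · simp [hΛpos.le]
      · have hdp : 0 < dist x y := dist_pos.mpr (Ne.symm hne)
        rw [div_le_iff₀ hdp]
        rcases le_total (u x - u y) 0 with h | h
        · rw [max_eq_right h]; positivity
        · rw [max_eq_left h]; exact hLip x y
    have hbddU : IsBoundedUnder (· ≤ ·) (𝓝[≠] x)
        (fun y => max (u x - u y) 0 / dist x y) :=
      ⟨Λ, Filter.eventually_map.mpr (Filter.Eventually.of_forall hub)⟩
    have hfreq : ∃ᶠ y in 𝓝[≠] x, Λ ≤ max (u x - u y) 0 / dist x y := by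
      rw [Filter.frequently_iff]
      intro U hU
      rw [Metric.mem_nhdsWithin_iff] at hU
      obtain ⟨ε, hε, hsub⟩ := hU
      set t := min (ε / 2) (d / 2) with hts
      have ht0 : 0 < t := lt_min (by linarith) (by linarith)
      have htd : t ≤ d := le_trans (min_le_right _ _) (by linarith)
      have hdxy : dist x (γ t) = t := hgx t ht0.le
      refine ⟨γ t, hsub ⟨?_, ?_⟩, ?_⟩
      · rw [mem_ball, dist_comm, hdxy]
        exact lt_of_le_of_lt (min_le_left _ _) (by linarith)
      · intro h
        rw [Set.mem_singleton_iff] at h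
        rw [h, dist_self] at hdxy
        linarith
      · rw [hval t ht0.le htd, hdxy, max_eq_left (by positivity),
          mul_div_assoc, div_self ht0.ne', mul_one]
    have hls : Λ ≤ mSubslope u x := Filter.le_limsup_of_frequently_le hfreq hbddU
    have hux : Λ * u x ≤ Λ := by
      rw [hu x, ← hd]
      have h1 : d ≤ R := hdleR x (subset_closure hx)
      have h2 : Λ * (Λ * d) ≤ Λ * (Λ * R) :=
        mul_le_mul_of_nonneg_left (mul_le_mul_of_nonneg_left h1 hΛpos.le) hΛpos.le
      have h3 : Λ * (Λ * R) = Λ * R * Λ := by ring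
      rw [h3, hΛR, one_mul] at h2
      exact h2
    exact hux.trans hls
end

section
/- Let (X,d) be a proper geodesic metric space, Ω ⊊ X a bounded domain, and let u : Ω → ℝ be a locally Lipschitz positive function satisfying comparison with cones from below in Ω. If x₀ ∈ Ω is an incenter, i.e. d(x₀, ∂Ω) = R_∞ := max_{x ∈ cl(Ω)} d(x, ∂Ω), then |∇⁻u|(x₀) ≤ u(x₀)/R_∞. -/
open Metric Filter Set Topology

theorem IsPreconnected.inter_frontier_nonempty {Y : Type*} [TopologicalSpace Y] {S t : Set Y}
    (hS : IsPreconnected S) (hin : (S ∩ t).Nonempty) (hout : (S \ t).Nonempty) :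
    (S ∩ frontier t).Nonempty := by
  by_contra hne
  have hcover : S ⊆ interior t ∪ (closure t)ᶜ := by
    intro z hz
    by_cases hzt : z ∈ interior t
    · exact Or.inl hzt
    · exact Or.inr fun hzc => hne ⟨z, hz, hzc, hzt⟩
  obtain ⟨z, hzS, hzi, hzc⟩ := hS _ _ isOpen_interior isClosed_closure.isOpen_compl hcover
    (let ⟨z, hzS, hzt⟩ := hin
     ⟨z, hzS, by_contra fun hzi => hne ⟨z, hzS, subset_closure hzt, hzi⟩⟩)
    (let ⟨z, hzS, hzt⟩ := hout
     ⟨z, hzS, fun hzc => hne ⟨z, hzS, hzc, fun hzi => hzt (interior_subset hzi)⟩⟩)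
  exact hzc (interior_subset_closure hzi)

namespace IsGeodesicSpace

variable {X : Type*} [MetricSpace X]

theorem exists_isometry (hgeo : IsGeodesicSpace X) (x y : X) :
    ∃ γ : ℝ → X, Isometry γ ∧ γ 0 = x ∧ γ (dist x y) = y := by
  obtain ⟨γ, h0, hd, hiso⟩ := hgeo x y
  exact ⟨γ, Isometry.of_dist_eq fun s t => by rw [hiso, Real.dist_eq], h0, hd⟩

theorem exists_mem_frontier_dist_le (hgeo : IsGeodesicSpace X) {s : Set X} {x y : X}
    (hx : x ∈ s) (hy : y ∉ s) : ∃ z ∈ frontier s, dist x z ≤ dist x y := by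
  obtain ⟨γ, hγ, h0, hd⟩ := hgeo.exists_isometry x y
  have hseg : IsPreconnected (γ '' Icc 0 (dist x y)) :=
    isPreconnected_Icc.image γ hγ.continuous.continuousOn
  obtain ⟨_, ⟨t, ht, rfl⟩, hfr⟩ := hseg.inter_frontier_nonempty
    ⟨x, ⟨0, ⟨le_rfl, dist_nonneg⟩, h0⟩, hx⟩ ⟨y, ⟨dist x y, ⟨dist_nonneg, le_rfl⟩, hd⟩, hy⟩
  refine ⟨γ t, hfr, ?_⟩
  rw [← h0, hγ.dist_eq, Real.dist_eq, zero_sub, abs_neg, abs_of_nonneg ht.1, h0]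
  exact ht.2

theorem infDist_frontier_le_dist (hgeo : IsGeodesicSpace X) {s : Set X} {x y : X}
    (hx : x ∈ s) (hy : y ∉ s) : infDist x (frontier s) ≤ dist x y :=
  let ⟨_, hz, hzy⟩ := hgeo.exists_mem_frontier_dist_le hx hy
  (infDist_le_dist_of_mem hz).trans hzy

theorem closedBall_subset_of_lt_infDist_frontier (hgeo : IsGeodesicSpace X) {s : Set X}
    {x : X} (hx : x ∈ s) {r : ℝ} (hr : r < infDist x (frontier s)) : closedBall x r ⊆ s :=
  fun _ hy => by_contra fun hys =>
    (hr.trans_le (hgeo.infDist_frontier_le_dist hx hys)).not_ge (mem_closedBall'.mp hy)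

theorem infDist_frontier_pos (hgeo : IsGeodesicSpace X) {s : Set X} (hs : IsOpen s)
    (hne : s ≠ univ) {x : X} (hx : x ∈ s) : 0 < infDist x (frontier s) := by
  obtain ⟨y, hy⟩ := (ne_univ_iff_exists_notMem s).mp hne
  obtain ⟨z, hz, -⟩ := hgeo.exists_mem_frontier_dist_le hx hy
  exact (isClosed_frontier.notMem_iff_infDist_pos ⟨z, hz⟩).mp fun hfr =>
    (hs.frontier_eq ▸ hfr).2 hx

theorem nhdsNE_neBot (hgeo : IsGeodesicSpace X) {x y : X} (hxy : x ≠ y) : (𝓝[≠] x).NeBot := by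
  obtain ⟨γ, hγ, h0, -⟩ := hgeo.exists_isometry x y
  have hseg : γ '' Ioc 0 (dist x y) ⊆ {x}ᶜ := by
    rintro _ ⟨t, ht, rfl⟩ (hxt : γ t = x)
    have : dist (γ 0) (γ t) = t := by
      rw [hγ.dist_eq, Real.dist_eq, zero_sub, abs_neg, abs_of_pos ht.1]
    rw [h0, hxt, dist_self] at this
    exact ht.1.ne this
  have hx : x ∈ closure (γ '' Ioc 0 (dist x y)) := by
    rw [← h0]
    refine mem_closure_image hγ.continuous.continuousAt ?_
    rw [h0, closure_Ioc (dist_pos.mpr hxy).ne]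
    exact ⟨le_rfl, dist_nonneg⟩
  exact mem_closure_iff_nhdsWithin_neBot.mp (closure_mono hseg hx) |>.mono (by rfl)

end IsGeodesicSpace

section Cones

variable {X : Type*} [MetricSpace X]

theorem mSubslope_le_of_eventually {u : X → ℝ} {x : X} [(𝓝[≠] x).NeBot] {L : ℝ} (hL : 0 ≤ L)
    (h : ∀ᶠ y in 𝓝 x, u x - L * dist x y ≤ u y) : mSubslope u x ≤ L := by
  refine limsup_le_of_le
    (isCoboundedUnder_le_of_le _ fun y => div_nonneg (le_max_right _ _) dist_nonneg) ?_
  filter_upwards [nhdsWithin_le_nhds h, self_mem_nhdsWithin] with y hy (hyx : y ≠ x)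
  rw [div_le_iff₀ (dist_pos.mpr hyx.symm)]
  exact max_le (by linarith) (by positivity)

-- Compare `u` on the punctured ball with the cone of apex `x` that equals `u x` at `x` and
-- vanishes on `sphere x r`.
theorem CompCones.sub_mul_dist_le [ProperSpace X] {Ω : Set X} {u : X → ℝ} (hcc : CompCones Ω u)
    {x : X} {r : ℝ} (hr : 0 < r) (hball : closedBall x r ⊆ Ω)
    (hu : ∀ z ∈ closedBall x r, 0 ≤ u z) {y : X} (hy : y ∈ ball x r) :
    u x - u x / r * dist x y ≤ u y := by
  rcases eq_or_ne y x with rfl | hyx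
  · simp
  set O := ball x r \ {x}
  have hO : IsOpen O := isOpen_ball.sdiff isClosed_singleton
  have hclO : closure O ⊆ closedBall x r :=
    (closure_mono sdiff_subset).trans closure_ball_subset_closedBall
  have hfrO : ∀ z ∈ frontier O, z = x ∨ dist x z = r := by
    intro z hz
    rw [hO.frontier_eq] at hz
    have hzr : dist z x ≤ r := hclO hz.1
    by_contra! hzx
    exact hz.2 ⟨mem_ball.mpr (hzr.lt_of_ne (dist_comm x z ▸ hzx.2)), hzx.1⟩
  have hux : 0 ≤ u x / r := div_nonneg (hu x (mem_closedBall_self hr.le)) hr.le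
  have hcone := hcc O hO ((isCompact_closedBall x r).of_isClosed_subset isClosed_closure hclO)
    (hclO.trans hball) x ⟨hball (mem_closedBall_self hr.le), fun hx => hx.2 rfl⟩ (u x)
    (-(u x / r)) (neg_nonpos.mpr hux) ?_ y (subset_closure ⟨hy, hyx⟩)
  · linarith
  intro z hz
  rcases hfrO z hz with rfl | hzr
  · simp
  · have hzu := hu z (hclO (frontier_subset_closure hz))
    rw [hzr, neg_mul, div_mul_cancel₀ _ hr.ne']
    linarith

theorem CompCones.mSubslope_le_div [ProperSpace X] {Ω : Set X} {u : X → ℝ} (hcc : CompCones Ω u)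
    {x : X} [(𝓝[≠] x).NeBot] {r : ℝ} (hr : 0 < r) (hball : closedBall x r ⊆ Ω)
    (hu : ∀ z ∈ closedBall x r, 0 ≤ u z) : mSubslope u x ≤ u x / r :=
  mSubslope_le_of_eventually (div_nonneg (hu x (mem_closedBall_self hr.le)) hr.le)
    (eventually_of_mem (ball_mem_nhds x hr) fun _ hy => hcc.sub_mul_dist_le hr hball hu hy)

end Cones

theorem stmt11_general {X : Type*} [MetricSpace X] [ProperSpace X] (hgeo : IsGeodesicSpace X)
    (Ω : Set X) (hΩo : IsOpen Ω)
    (hΩne : Ω ≠ Set.univ)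
    (u : X → ℝ) (hpos : ∀ x ∈ Ω, 0 < u x)
    (hcc : CompCones Ω u)
    (R : ℝ)
    (x₀ : X) (hx₀ : x₀ ∈ Ω) (hinc : Metric.infDist x₀ (frontier Ω) = R) :
    mSubslope u x₀ ≤ u x₀ / R := by
  obtain ⟨y, hy⟩ := (ne_univ_iff_exists_notMem Ω).mp hΩne
  have := hgeo.nhdsNE_neBot (ne_of_mem_of_not_mem hx₀ hy)
  have hR : 0 < R := hinc ▸ hgeo.infDist_frontier_pos hΩo hΩne hx₀
  have hbound : ∀ r ∈ Ioo 0 R, mSubslope u x₀ ≤ u x₀ / r := fun r hr =>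
    have hball := hgeo.closedBall_subset_of_lt_infDist_frontier hx₀ (hinc ▸ hr.2)
    hcc.mSubslope_le_div hr.1 hball fun z hz => (hpos z (hball hz)).le
  have hlim : Tendsto (fun r => u x₀ / r) (𝓝[<] R) (𝓝 (u x₀ / R)) :=
    ((continuousAt_const.div continuousAt_id hR.ne').tendsto).mono_left nhdsWithin_le_nhds
  exact ge_of_tendsto hlim (eventually_of_mem (Ioo_mem_nhdsLT hR) hbound)

theorem stmt11 {X : Type*} [MetricSpace X] [ProperSpace X] (hgeo : IsGeodesicSpace X)
    (Ω : Set X) (hΩo : IsOpen Ω) (hΩc : IsConnected Ω) (hΩb : Bornology.IsBounded Ω)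
    (hΩne : Ω ≠ Set.univ)
    (u : X → ℝ) (hlip : LocLipOn Ω u) (hpos : ∀ x ∈ Ω, 0 < u x)
    (hcc : CompCones Ω u)
    (R : ℝ) (hR : R = sSup ((fun x => Metric.infDist x (frontier Ω)) '' closure Ω))
    (x₀ : X) (hx₀ : x₀ ∈ Ω) (hinc : Metric.infDist x₀ (frontier Ω) = R) :
    mSubslope u x₀ ≤ u x₀ / R :=
  stmt11_general hgeo Ω hΩo hΩne u hpos hcc R x₀ hx₀ hinc
end

section
/- Let (X,d) be a proper geodesic metric space and Ω ⊊ X a bounded domain. Define Λ = sup{ λ ∈ ℝ : there exists a locally Lipschitz positive function u on Ω satisfying comparison with cones from below and |∇⁻u| ≥ λ·u everywhere in Ω }, and let Λ_∞ = 1 / max_{x ∈ cl(Ω)} d(x, ∂Ω). Then Λ = Λ_∞. -/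
open Metric Filter Set Topology

section AuxGeo
variable {X : Type*} [MetricSpace X]

/-- A point on the geodesic at prescribed distance. -/
lemma geo_point (hgeo : IsGeodesicSpace X) (x z : X) {t : ℝ} (ht0 : 0 ≤ t)
    (ht : t ≤ dist x z) : ∃ w : X, dist x w = t ∧ dist w z = dist x z - t := by
  obtain ⟨γ, hγ0, hγL, hγd⟩ := hgeo x z
  refine ⟨γ t, ?_, ?_⟩
  · rw [← hγ0, hγd]; rw [abs_sub_comm]; rw [sub_zero, abs_of_nonneg ht0]
  · have h := hγd t (dist x z)
    rw [hγL] at h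
    rw [h, abs_of_nonpos (by linarith), neg_sub]

/-- The geodesic from a point outside an open set `O` to a point of `closure O`
crosses the frontier of `O`. -/
lemma geo_cross (hgeo : IsGeodesicSpace X) {O : Set X} (hO : IsOpen O) {x z : X}
    (hx : x ∉ O) (hz : z ∈ closure O) :
    ∃ w ∈ frontier O, dist x w + dist w z = dist x z := by
  obtain ⟨γ, hγ0, hγL, hγd⟩ := hgeo x z
  have hγc : Continuous γ := by
    refine LipschitzWith.continuous (K := 1) (LipschitzWith.of_dist_le_mul fun s t => ?_)
    rw [hγd, Real.dist_eq]; simp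
  set L := dist x z with hL
  have hL0 : 0 ≤ L := dist_nonneg
  set T : Set ℝ := Set.Icc 0 L ∩ γ ⁻¹' closure O with hT
  have hTne : T.Nonempty := ⟨L, ⟨hL0, le_refl L⟩, by simpa [hγL] using hz⟩
  have hTc : IsClosed T := isClosed_Icc.inter (isClosed_closure.preimage hγc)
  have hTbd : BddBelow T := ⟨0, fun t ht => ht.1.1⟩
  set t₀ := sInf T with ht₀
  have ht₀T : t₀ ∈ T := hTc.csInf_mem hTne hTbd
  have ht₀0 : 0 ≤ t₀ := ht₀T.1.1
  have ht₀L : t₀ ≤ L := ht₀T.1.2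
  have hwO : γ t₀ ∉ O := by
    intro hmem
    rcases eq_or_lt_of_le ht₀0 with h0 | h0
    · exact hx (by rwa [← h0, hγ0] at hmem)
    · have hop : IsOpen (γ ⁻¹' O) := hO.preimage hγc
      obtain ⟨ε, hε, hball⟩ := Metric.isOpen_iff.mp hop t₀ hmem
      set t₁ := t₀ - min ε t₀ / 2 with ht₁
      have hmin : 0 < min ε t₀ := lt_min hε h0
      have ht₁0 : 0 ≤ t₁ := by
        have : min ε t₀ ≤ t₀ := min_le_right _ _
        simp only [ht₁]; linarith
      have ht₁lt : t₁ < t₀ := by simp only [ht₁]; linarith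
      have ht₁mem : t₁ ∈ γ ⁻¹' O := by
        apply hball
        rw [Metric.mem_ball, Real.dist_eq]
        have h : |t₁ - t₀| = min ε t₀ / 2 := by
          rw [abs_of_nonpos (by simp only [ht₁]; linarith)]; simp only [ht₁]; ring
        rw [h]
        have : min ε t₀ ≤ ε := min_le_left _ _
        linarith
      have : t₀ ≤ t₁ := csInf_le hTbd ⟨⟨ht₁0, le_trans ht₁lt.le ht₀L⟩, subset_closure ht₁mem⟩
      linarith
  refine ⟨γ t₀, ?_, ?_⟩
  · rw [hO.frontier_eq]; exact ⟨ht₀T.2, hwO⟩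
  · have h1 : dist x (γ t₀) = t₀ := by
      rw [← hγ0, hγd, abs_sub_comm, sub_zero, abs_of_nonneg ht₀0]
    have h2 : dist (γ t₀) z = L - t₀ := by
      have h := hγd t₀ (dist x z)
      rw [hγL] at h
      rw [h, abs_of_nonpos (by linarith), neg_sub]
    rw [h1, h2]; ring

/-- Points at distance less than the inradius belong to the open set. -/
lemma mem_of_dist_lt_infDist (hgeo : IsGeodesicSpace X) {Ω : Set X} (hΩo : IsOpen Ω) {x z : X}
    (hx : x ∈ Ω) (h : dist x z < Metric.infDist x (frontier Ω)) : z ∈ Ω := by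
  by_contra hz
  obtain ⟨w, hwF, hwd⟩ := geo_cross hgeo hΩo hz (subset_closure hx)
  have h1 : Metric.infDist x (frontier Ω) ≤ dist x w := Metric.infDist_le_dist_of_mem hwF
  have h2 : dist x w ≤ dist x z := by
    rw [dist_comm x w, dist_comm x z, ← hwd]
    have := dist_nonneg (x := w) (y := x)
    linarith [dist_nonneg (x := z) (y := w), dist_comm w x ▸ le_refl (dist w x)]
  linarith

end AuxGeo

section AuxDist
variable {X : Type*} [MetricSpace X] [ProperSpace X]

/-- The distance to the boundary satisfies comparison with cones from below. -/
lemma compCones_infDist (hgeo : IsGeodesicSpace X) {Ω : Set X} (hΩo : IsOpen Ω)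
    (hFne : (frontier Ω).Nonempty) :
    CompCones Ω (fun x => Metric.infDist x (frontier Ω)) := by
  set g : X → ℝ := fun x => Metric.infDist x (frontier Ω) with hg
  have hgl : ∀ y z : X, g y ≤ g z + dist y z := by
    intro y z
    have h := (Metric.lipschitz_infDist_pt (frontier Ω)).dist_le_mul y z
    rw [Real.dist_eq, NNReal.coe_one, one_mul] at h
    have := abs_le.mp h
    linarith [this.1]
  intro O hO hOc hOsub xhat hxhat a κ hκ hbd z hz
  rcases le_or_gt κ (-1) with hκ1 | hκ1
  · -- steep cones: use the geodesic from the apex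
    obtain ⟨w, hw, hwd⟩ := geo_cross hgeo hO hxhat.2 hz
    have h1 := hbd w hw
    have h2 : g w ≤ g z + dist w z := hgl w z
    have h3 : κ * dist w z ≤ -1 * dist w z :=
      mul_le_mul_of_nonneg_right hκ1 dist_nonneg
    have : a + κ * dist xhat z = (a + κ * dist xhat w) + κ * dist w z := by
      rw [← hwd]; ring
    rw [this]
    linarith
  · -- shallow cones: maximum principle argument
    have hclne : (closure O).Nonempty := ⟨z, hz⟩
    have hcont : ContinuousOn (fun y => a + κ * dist xhat y - g y) (closure O) := by
      apply Continuous.continuousOn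
      have h1 : Continuous fun y => dist xhat y := Continuous.dist continuous_const continuous_id
      have h2 : Continuous g := (Metric.lipschitz_infDist_pt (frontier Ω)).continuous
      continuity
    obtain ⟨z₀, hz₀m, hz₀max⟩ := hOc.exists_isMaxOn hclne hcont
    have hz₀le : a + κ * dist xhat z₀ - g z₀ ≤ 0 := by
      rcases em (z₀ ∈ O) with hz₀O | hz₀O
      · exfalso
        have hz₀Ω : z₀ ∈ Ω := hOsub hz₀m
        obtain ⟨p, hpF, hpd⟩ := isClosed_frontier.exists_infDist_eq_dist hFne z₀
        have hgz₀ : 0 < g z₀ := by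
          rw [hg]
          exact (isClosed_frontier.notMem_iff_infDist_pos hFne).mp
            (fun hmem => (hΩo.frontier_eq ▸ hmem).2 hz₀Ω)
        obtain ⟨ε, hε, hball⟩ := Metric.isOpen_iff.mp hO z₀ hz₀O
        set t := min (ε / 2) (g z₀ / 2) with htdef
        have ht0 : 0 < t := lt_min (by linarith) (by linarith)
        have htg : t ≤ dist z₀ p := by
          rw [← hpd]
          calc t ≤ g z₀ / 2 := min_le_right _ _
            _ ≤ g z₀ := by linarith
        obtain ⟨w, hw1, hw2⟩ := geo_point hgeo z₀ p ht0.le htg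
        have hwO : w ∈ O := by
          apply hball
          rw [Metric.mem_ball, dist_comm, hw1]
          calc t ≤ ε / 2 := min_le_left _ _
            _ < ε := by linarith
        have hgw : g w ≤ g z₀ - t := by
          calc g w ≤ dist w p := Metric.infDist_le_dist_of_mem hpF
            _ = dist z₀ p - t := hw2
            _ = g z₀ - t := by rw [← hpd]
        have hdw : dist xhat w ≤ dist xhat z₀ + t := by
          calc dist xhat w ≤ dist xhat z₀ + dist z₀ w := dist_triangle _ _ _
            _ = dist xhat z₀ + t := by rw [hw1]
        have hcw : κ * dist xhat z₀ + κ * t ≤ κ * dist xhat w := by nlinarith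
        have hmax := hz₀max (subset_closure hwO)
        simp only [mem_setOf_eq] at hmax
        nlinarith
      · have : z₀ ∈ frontier O := by rw [hO.frontier_eq]; exact ⟨hz₀m, hz₀O⟩
        linarith [hbd z₀ this]
    have := hz₀max hz
    simp only [mem_setOf_eq] at this
    linarith

end AuxDist

section AuxSlope
variable {X : Type*} [MetricSpace X] [ProperSpace X]

lemma neBot_punctured (hgeo : IsGeodesicSpace X) {x q : X} (h : x ≠ q) :
    (𝓝[≠] x).NeBot := by
  rw [← mem_closure_iff_nhdsWithin_neBot]
  rw [Metric.mem_closure_iff]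
  intro ε hε
  have hdq : 0 < dist x q := dist_pos.mpr h
  set t := min (ε / 2) (dist x q) with htdef
  have ht0 : 0 < t := lt_min (by linarith) hdq
  obtain ⟨w, hw1, -⟩ := geo_point hgeo x q ht0.le (min_le_right _ _)
  refine ⟨w, ?_, ?_⟩
  · simp only [mem_compl_iff, mem_singleton_iff]
    intro hwx
    rw [hwx] at hw1
    simp at hw1
    linarith
  · rw [hw1]
    calc t ≤ ε / 2 := min_le_left _ _
      _ < ε := by linarith

lemma one_le_mSubslope_infDist (hgeo : IsGeodesicSpace X) {Ω : Set X} (hΩo : IsOpen Ω)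
    (hFne : (frontier Ω).Nonempty) {x : X} (hx : x ∈ Ω) :
    1 ≤ mSubslope (fun y => Metric.infDist y (frontier Ω)) x := by
  set g : X → ℝ := fun y => Metric.infDist y (frontier Ω) with hg
  have hgl : ∀ y z : X, g y ≤ g z + dist y z := by
    intro y z
    have h := (Metric.lipschitz_infDist_pt (frontier Ω)).dist_le_mul y z
    rw [Real.dist_eq, NNReal.coe_one, one_mul] at h
    have h2 := (abs_le.mp h).2
    show Metric.infDist y (frontier Ω) ≤ Metric.infDist z (frontier Ω) + dist y z
    linarith
  have hgx : 0 < g x := (isClosed_frontier.notMem_iff_infDist_pos hFne).mp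
    (fun hmem => (hΩo.frontier_eq ▸ hmem).2 hx)
  obtain ⟨p, hpF, hpd⟩ := isClosed_frontier.exists_infDist_eq_dist hFne x
  have hpdx : dist x p = g x := hpd.symm
  -- boundedness
  have hb : ∀ᶠ y in 𝓝[≠] x, max (g x - g y) 0 / dist x y ≤ 1 := by
    filter_upwards [self_mem_nhdsWithin] with y hy
    have hyx : y ≠ x := hy
    have hd : 0 < dist x y := dist_pos.mpr (Ne.symm hyx)
    rw [div_le_one hd]
    refine max_le ?_ hd.le
    have := hgl x y
    linarith
  -- frequently equal to 1 along the geodesic to the nearest boundary point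
  obtain ⟨γ, hγ0, hγL, hγd⟩ := hgeo x p
  have hfreq : ∃ᶠ y in 𝓝[≠] x, 1 ≤ max (g x - g y) 0 / dist x y := by
    set l : Filter ℝ := 𝓝[Set.Ioo 0 (g x)] 0 with hl
    have hlne : l.NeBot := by
      rw [hl, ← mem_closure_iff_nhdsWithin_neBot, closure_Ioo (ne_of_lt hgx)]
      exact ⟨le_refl 0, hgx.le⟩
    have hdist : ∀ t : ℝ, dist x (γ t) = |t| := by
      intro t
      rw [← hγ0, hγd, abs_sub_comm, sub_zero]
    have htend : Filter.Tendsto γ l (𝓝[≠] x) := by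
      rw [tendsto_nhdsWithin_iff]
      constructor
      · rw [tendsto_iff_dist_tendsto_zero]
        have : (fun t => dist (γ t) x) = fun t : ℝ => |t| := by
          funext t; rw [dist_comm]; exact hdist t
        rw [this]
        have h0 : |(0 : ℝ)| = 0 := abs_zero
        have := (continuous_abs.tendsto (0 : ℝ)).mono_left (nhdsWithin_le_nhds (s := Set.Ioo 0 (g x)))
        rwa [h0] at this
      · filter_upwards [self_mem_nhdsWithin] with t ht
        simp only [mem_compl_iff, mem_singleton_iff]
        intro hcon
        have h := hdist t
        rw [hcon, dist_self] at h
        have ht0 : t = 0 := abs_eq_zero.mp h.symm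
        have := ht.1
        linarith
    have hev : ∀ᶠ t in l, 1 ≤ max (g x - g (γ t)) 0 / dist x (γ t) := by
      filter_upwards [self_mem_nhdsWithin] with t ht
      obtain ⟨ht0, htL⟩ := ht
      have hdxt : dist x (γ t) = t := by rw [hdist t, abs_of_nonneg ht0.le]
      have hγt : g (γ t) ≤ g x - t := by
        have h1 : g (γ t) ≤ dist (γ t) p := Metric.infDist_le_dist_of_mem hpF
        have h2 : dist (γ t) p = g x - t := by
          have h := hγd t (dist x p)
          rw [hγL] at h
          rw [h, abs_of_nonpos (by rw [hpdx]; linarith), neg_sub, hpdx]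
        linarith
      rw [hdxt, le_div_iff₀ ht0, one_mul]
      calc t ≤ g x - g (γ t) := by linarith
        _ ≤ max (g x - g (γ t)) 0 := le_max_left _ _
    exact htend.frequently (hev.frequently)
  have := le_limsup_of_frequently_le hfreq ⟨1, Filter.eventually_map.mpr hb⟩
  exact this

end AuxSlope

theorem stmt12 {X : Type*} [MetricSpace X] [ProperSpace X] (hgeo : IsGeodesicSpace X)
    (Ω : Set X) (hΩo : IsOpen Ω) (hΩc : IsConnected Ω) (hΩb : Bornology.IsBounded Ω)
    (hΩne : Ω ≠ Set.univ) :
    sSup {l : ℝ | ∃ u : X → ℝ, LocLipOn Ω u ∧ (∀ x ∈ Ω, 0 < u x) ∧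
        CompCones Ω u ∧ ∀ x ∈ Ω, l * u x ≤ mSubslope u x}
      = 1 / sSup ((fun x => Metric.infDist x (frontier Ω)) '' closure Ω) := by
  classical
  obtain ⟨x1, hx1⟩ := hΩc.nonempty
  obtain ⟨q, hq⟩ : ∃ q, q ∉ Ω := by
    by_contra h
    push_neg at h
    exact hΩne (Set.eq_univ_of_forall h)
  have hFne : (frontier Ω).Nonempty := by
    obtain ⟨w, hw, -⟩ := geo_cross hgeo hΩo hq (subset_closure hx1)
    exact ⟨w, hw⟩
  have hgpos : ∀ x ∈ Ω, 0 < Metric.infDist x (frontier Ω) := fun x hx =>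
    (isClosed_frontier.notMem_iff_infDist_pos hFne).mp
      (fun hmem => (hΩo.frontier_eq ▸ hmem).2 hx)
  have hKc : IsCompact (closure Ω) := hΩb.isCompact_closure
  have himgc : IsCompact ((fun x => Metric.infDist x (frontier Ω)) '' closure Ω) :=
    hKc.image (Metric.lipschitz_infDist_pt _).continuous
  have himgne : ((fun x => Metric.infDist x (frontier Ω)) '' closure Ω).Nonempty :=
    ⟨_, ⟨x1, subset_closure hx1, rfl⟩⟩
  set R := sSup ((fun x => Metric.infDist x (frontier Ω)) '' closure Ω) with hR
  have hRmem : R ∈ (fun x => Metric.infDist x (frontier Ω)) '' closure Ω :=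
    himgc.sSup_mem himgne
  obtain ⟨x₀, hx₀K, hx₀R⟩ := hRmem
  have hx₀R' : Metric.infDist x₀ (frontier Ω) = R := hx₀R
  have hRub : ∀ x ∈ closure Ω, Metric.infDist x (frontier Ω) ≤ R := fun x hx =>
    le_csSup himgc.bddAbove ⟨x, hx, rfl⟩
  have hRpos : 0 < R := lt_of_lt_of_le (hgpos x1 hx1) (hRub x1 (subset_closure hx1))
  have hx₀Ω : x₀ ∈ Ω := by
    by_contra hcon
    have hxF : x₀ ∈ frontier Ω := by
      rw [frontier, hΩo.interior_eq]; exact ⟨hx₀K, hcon⟩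
    have h0 : Metric.infDist x₀ (frontier Ω) = 0 := Metric.infDist_zero_of_mem hxF
    rw [hx₀R'] at h0; linarith
  -- membership of 1/R
  have hmemS : (1 / R) ∈ {l : ℝ | ∃ u : X → ℝ, LocLipOn Ω u ∧ (∀ x ∈ Ω, 0 < u x) ∧
      CompCones Ω u ∧ ∀ x ∈ Ω, l * u x ≤ mSubslope u x} := by
    refine ⟨fun x => Metric.infDist x (frontier Ω), ?_, hgpos,
      compCones_infDist hgeo hΩo hFne, ?_⟩
    · exact fun x _ => ⟨1, Set.univ, Filter.univ_mem,
        (Metric.lipschitz_infDist_pt _).lipschitzOnWith⟩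
    · intro x hx
      have h1 : 1 / R * Metric.infDist x (frontier Ω) ≤ 1 := by
        rw [div_mul_eq_mul_div, one_mul, div_le_one hRpos]
        exact hRub x (subset_closure hx)
      exact h1.trans (one_le_mSubslope_infDist hgeo hΩo hFne hx)
  -- upper bound
  have hub : ∀ l ∈ {l : ℝ | ∃ u : X → ℝ, LocLipOn Ω u ∧ (∀ x ∈ Ω, 0 < u x) ∧
      CompCones Ω u ∧ ∀ x ∈ Ω, l * u x ≤ mSubslope u x}, l ≤ 1 / R := by
    rintro l ⟨u, hlip, hupos, hcc, heig⟩
    rcases le_or_gt l 0 with hl0 | hl0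
    · exact hl0.trans (by positivity)
    have hucont : ∀ y ∈ Ω, ContinuousAt u y := by
      intro y hy
      obtain ⟨K, t, htm, hK⟩ := hlip y hy
      rw [hΩo.nhdsWithin_eq hy] at htm
      exact hK.continuousOn.continuousAt htm
    have key : ∀ r : ℝ, 0 < r → r < R → l * r < 1 := by
      intro r hr0 hrR
      have hrg : r < Metric.infDist x₀ (frontier Ω) := by rw [hx₀R']; exact hrR
      have hub2 : ∀ z : X, dist x₀ z ≤ r → z ∈ Ω := fun z hz =>
        mem_of_dist_lt_infDist hgeo hΩo hx₀Ω (lt_of_le_of_lt hz hrg)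
      have hqd : Metric.infDist x₀ (frontier Ω) ≤ dist x₀ q := by
        obtain ⟨w, hwF, hwd⟩ := geo_cross hgeo hΩo hq (subset_closure hx₀Ω)
        calc Metric.infDist x₀ (frontier Ω) ≤ dist x₀ w := Metric.infDist_le_dist_of_mem hwF
          _ ≤ dist x₀ q := by
              rw [dist_comm x₀ w, dist_comm x₀ q, ← hwd]
              linarith [dist_nonneg (x := q) (y := w)]
      obtain ⟨yr, hyr1, hyr2⟩ := geo_point hgeo x₀ q hr0.le (le_trans hrg.le hqd)
      have hSpc : IsCompact (Metric.sphere x₀ r) :=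
        (isCompact_closedBall x₀ r).of_isClosed_subset Metric.isClosed_sphere
          Metric.sphere_subset_closedBall
      have hSpne : (Metric.sphere x₀ r).Nonempty :=
        ⟨yr, by rw [Metric.mem_sphere, dist_comm]; exact hyr1⟩
      have hSpΩ : Metric.sphere x₀ r ⊆ Ω := by
        intro z hz
        rw [Metric.mem_sphere] at hz
        exact hub2 z (le_of_eq (by rwa [dist_comm]))
      have himc : IsCompact (u '' Metric.sphere x₀ r) :=
        hSpc.image_of_continuousOn (fun z hz => (hucont z (hSpΩ hz)).continuousWithinAt)
      set m := sInf (u '' Metric.sphere x₀ r) with hm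
      obtain ⟨zm, hzm, hzmu⟩ := himc.sInf_mem (hSpne.image u)
      have hmpos : 0 < m := by rw [hm, ← hzmu]; exact hupos zm (hSpΩ hzm)
      have hmle : ∀ z ∈ Metric.sphere x₀ r, m ≤ u z := fun z hz =>
        csInf_le himc.bddBelow ⟨z, hz, rfl⟩
      set a := min m (u x₀) with hadef
      have hau : a ≤ u x₀ := min_le_right _ _
      have hapos : 0 < a := lt_min hmpos (hupos x₀ hx₀Ω)
      set κ := (a - u x₀) / r with hκdef
      have hκ : κ ≤ 0 := div_nonpos_iff.mpr (Or.inr ⟨by linarith, hr0.le⟩)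
      set O := Metric.ball x₀ r \ {x₀} with hOdef
      have hOo : IsOpen O := Metric.isOpen_ball.sdiff isClosed_singleton
      have hOcl : closure O ⊆ Metric.closedBall x₀ r :=
        closure_minimal (fun z hz => Metric.ball_subset_closedBall hz.1) Metric.isClosed_closedBall
      have hOΩ : closure O ⊆ Ω := by
        intro z hz
        have h := hOcl hz
        rw [Metric.mem_closedBall] at h
        exact hub2 z (by rwa [dist_comm])
      have hOc2 : IsCompact (closure O) :=
        (isCompact_closedBall x₀ r).of_isClosed_subset isClosed_closure hOcl
      have hx₀O : x₀ ∉ O := fun h => h.2 rfl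
      have hfr : ∀ w ∈ frontier O, u x₀ + κ * dist x₀ w ≤ u w := by
        intro w hw
        rw [hOo.frontier_eq] at hw
        obtain ⟨hw1, hw2⟩ := hw
        rcases eq_or_ne w x₀ with rfl | hwx
        · rw [dist_self, mul_zero, add_zero]
        · have hwle : dist x₀ w ≤ r := by
            have h := hOcl hw1
            rw [Metric.mem_closedBall] at h
            rwa [dist_comm]
          have hnlt : ¬ dist x₀ w < r := fun hlt =>
            hw2 ⟨Metric.mem_ball.mpr (by rwa [dist_comm]), hwx⟩
          have hdw : dist x₀ w = r := le_antisymm hwle (not_lt.mp hnlt)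
          rw [hdw]
          have he : u x₀ + κ * r = a := by
            rw [hκdef, div_mul_cancel₀ _ hr0.ne']; ring
          rw [he]
          exact le_trans (min_le_left _ _)
            (hmle w (by rw [Metric.mem_sphere, dist_comm]; exact hdw))
      have hcone := hcc O hOo hOc2 hOΩ x₀ ⟨hx₀Ω, hx₀O⟩ (u x₀) κ hκ hfr
      haveI : (𝓝[≠] x₀).NeBot :=
        neBot_punctured hgeo (show x₀ ≠ q from fun h => hq (h ▸ hx₀Ω))
      have hsub : mSubslope u x₀ ≤ -κ := by
        have hcob : (𝓝[≠] x₀).IsCoboundedUnder (· ≤ ·)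
            (fun y => max (u x₀ - u y) 0 / dist x₀ y) := by
          apply Filter.IsBoundedUnder.isCoboundedUnder_le
          refine ⟨0, Filter.eventually_map.mpr (Filter.Eventually.of_forall fun y => ?_)⟩
          positivity
        apply Filter.limsup_le_of_le hcob
        have hball : Metric.ball x₀ r ∈ 𝓝 x₀ := Metric.ball_mem_nhds x₀ hr0
        filter_upwards [self_mem_nhdsWithin, mem_nhdsWithin_of_mem_nhds hball] with y hy1 hy2
        have hyO : y ∈ O := ⟨hy2, hy1⟩
        have hcy := hcone y (subset_closure hyO)
        have hd : 0 < dist x₀ y := dist_pos.mpr (fun h => hy1 h.symm)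
        rw [div_le_iff₀ hd]
        refine max_le (by linarith) (mul_nonneg (by linarith) hd.le)
      have h1 := heig x₀ hx₀Ω
      have h3 : l * u x₀ ≤ (u x₀ - a) / r := by
        have h4 : -κ = (u x₀ - a) / r := by rw [hκdef]; ring
        rw [← h4]
        exact le_trans h1 hsub
      have h2 : l * u x₀ * r ≤ u x₀ - a := (le_div_iff₀ hr0).mp h3
      have h5 : l * r * u x₀ < 1 * u x₀ := by nlinarith
      exact lt_of_mul_lt_mul_right h5 (hupos x₀ hx₀Ω).le
    by_contra hcon
    push_neg at hcon
    have hlR : 1 < l * R := by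
      rw [div_lt_iff₀ hRpos] at hcon
      linarith
    have h1l : 1 / l < R := by
      rw [div_lt_iff₀ hl0]
      linarith [mul_comm l R]
    set r := (1 / l + R) / 2 with hrdef
    have hr0 : 0 < r := by
      have : 0 < 1 / l := by positivity
      rw [hrdef]; linarith
    have hrR : r < R := by rw [hrdef]; linarith
    have hkey := key r hr0 hrR
    have hlr : l * r = (1 + l * R) / 2 := by
      rw [hrdef]; field_simp
    rw [hlr] at hkey
    linarith
  exact le_antisymm (csSup_le ⟨1 / R, hmemS⟩ hub) (le_csSup ⟨1 / R, fun l hl => hub l hl⟩ hmemS)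
end

section
/- Let (X,d) be a proper geodesic metric space and Ω ⊊ X a bounded domain. Let S be a nonempty family of nonnegative functions on Ω, each satisfying comparison with cones from below in Ω. Then the pointwise infimum w(x) = inf{ u(x) : u ∈ S } also satisfies comparison with cones from below in Ω. -/
open Metric Filter Set Topology

theorem stmt13 {X : Type*} [MetricSpace X] [ProperSpace X] (hgeo : IsGeodesicSpace X)
    (Ω : Set X) (hΩo : IsOpen Ω) (hΩc : IsConnected Ω) (hΩb : Bornology.IsBounded Ω)
    (hΩne : Ω ≠ Set.univ)
    (S : Set (X → ℝ)) (hSne : S.Nonempty)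
    (hS : ∀ u ∈ S, (∀ x ∈ Ω, 0 ≤ u x) ∧ CompCones Ω u)
    (w : X → ℝ) (hw : ∀ x, w x = sInf ((fun u : X → ℝ => u x) '' S)) :
    CompCones Ω w := by
  intro O hO hOc hOΩ xhat hx a κ hκ hbd z hz
  rw [hw z]
  apply le_csInf (hSne.image _)
  rintro _ ⟨u, huS, rfl⟩
  obtain ⟨hpos, hcc⟩ := hS u huS
  refine hcc O hO hOc hOΩ xhat hx a κ hκ ?_ z hz
  intro y hy
  have hyΩ : y ∈ Ω := hOΩ hy.1
  have hbb : BddBelow ((fun u : X → ℝ => u y) '' S) := by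
    refine ⟨0, ?_⟩
    rintro _ ⟨v, hvS, rfl⟩
    exact (hS v hvS).1 y hyΩ
  calc a + κ * dist xhat y ≤ w y := hbd y hy
    _ ≤ u y := by
        rw [hw y]
        exact csInf_le hbb ⟨u, huS, rfl⟩
end

section
/- Let (X,d) be a proper geodesic metric space, Ω ⊊ X a bounded domain, and λ > 0. Let S be a nonempty family of nonnegative locally Lipschitz functions u on Ω each satisfying |∇⁻u| ≥ λ·u everywhere in Ω. If the pointwise infimum w(x) = inf{ u(x) : u ∈ S } is locally Lipschitz in Ω, then w is nonnegative and satisfies |∇⁻w| ≥ λ·w everywhere in Ω. -/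
open Metric Filter Set Topology

section Aux

variable {X : Type*} [MetricSpace X]

/-- In a geodesic space no point is isolated. -/
lemma IsGeodesicSpace.punctured_neBot (hgeo : IsGeodesicSpace X) (z : X) :
    (𝓝[≠] z).NeBot := by
  rw [← mem_closure_iff_nhdsWithin_neBot, Metric.mem_closure_iff]
  intro ε hε
  obtain ⟨γ, h0, -, hd⟩ := hgeo z z
  have h1 : dist (γ (ε / 2)) (γ 0) = |ε / 2 - 0| := hd _ _
  rw [h0, sub_zero, abs_of_pos (by linarith)] at h1
  refine ⟨γ (ε / 2), ?_, ?_⟩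
  · simp only [Set.mem_compl_iff, Set.mem_singleton_iff]
    intro hcontra
    rw [hcontra, dist_self] at h1
    linarith
  · rw [dist_comm, h1]; linarith

lemma LocLipOn.continuousOn' {Ω : Set X} {u : X → ℝ} (hΩo : IsOpen Ω)
    (hu : LocLipOn Ω u) : ContinuousOn u Ω := by
  intro x hx
  obtain ⟨K, t, ht, hL⟩ := hu x hx
  rw [hΩo.nhdsWithin_eq hx] at ht
  exact (hL.continuousOn.continuousAt ht).continuousWithinAt

lemma quot_bddAbove {u : X → ℝ} {x : X} {K : NNReal} {t : Set X}
    (ht : t ∈ 𝓝 x) (hL : LipschitzOnWith K u t) :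
    (𝓝[≠] x).IsBoundedUnder (· ≤ ·) (fun y => max (u x - u y) 0 / dist x y) := by
  refine ⟨(K : ℝ), eventually_map.mpr ?_⟩
  filter_upwards [mem_nhdsWithin_of_mem_nhds ht, self_mem_nhdsWithin] with y hyt hyx
  have hyx' : y ≠ x := hyx
  have hd : (0:ℝ) < dist x y := dist_pos.mpr (Ne.symm hyx')
  rw [div_le_iff₀ hd]
  have h1 : dist (u x) (u y) ≤ (K : ℝ) * dist x y := hL.dist_le_mul x (mem_of_mem_nhds ht) y hyt
  rw [Real.dist_eq] at h1
  exact max_le (le_trans (le_abs_self _) h1) (by positivity)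

lemma quot_nonneg (u : X → ℝ) (x y : X) : 0 ≤ max (u x - u y) 0 / dist x y :=
  div_nonneg (le_max_right _ _) dist_nonneg

/-- Key variational lemma: if the subslope of `u` is at least `m` on a closed ball,
then there is a point on the sphere where `u` has dropped at rate at least `μ < m`. -/
lemma drop_lemma [ProperSpace X] (hgeo : IsGeodesicSpace X) {u : X → ℝ} {x : X}
    {r μ μ' m : ℝ} (hr : 0 < r) (hμ0 : 0 < μ) (hμ : μ < μ') (hμ'm : μ' < m)
    (hcont : ContinuousOn u (Metric.closedBall x r))
    (hsub : ∀ z ∈ Metric.closedBall x r, dist x z < r → m ≤ mSubslope u z) :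
    ∃ z, dist x z = r ∧ u z + μ * r ≤ u x := by
  set K := Metric.closedBall x r with hK
  have hKc : IsCompact K := isCompact_closedBall x r
  have hKne : K.Nonempty := ⟨x, Metric.mem_closedBall_self hr.le⟩
  have hgc : ContinuousOn (fun z => u z + μ * dist x z) K :=
    hcont.add (continuous_const.mul (continuous_const.dist continuous_id)).continuousOn
  obtain ⟨z₀, hz₀K, hmin⟩ := hKc.exists_isMinOn hKne hgc
  have hz₀r : dist x z₀ ≤ r := by
    rw [dist_comm]; exact Metric.mem_closedBall.mp hz₀K
  rcases lt_or_eq_of_le hz₀r with hlt | heq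
  · exfalso
    have hne : (𝓝[≠] z₀).NeBot := hgeo.punctured_neBot z₀
    have hcob : (𝓝[≠] z₀).IsCoboundedUnder (· ≤ ·)
        (fun y => max (u z₀ - u y) 0 / dist z₀ y) :=
      Filter.isCoboundedUnder_le_of_le _ (fun y => quot_nonneg u z₀ y)
    have hfreq : ∃ᶠ y in 𝓝[≠] z₀, μ' < max (u z₀ - u y) 0 / dist z₀ y :=
      Filter.frequently_lt_of_lt_limsup hcob (lt_of_lt_of_le hμ'm (hsub z₀ hz₀K hlt))
    have hev : ∀ᶠ y in 𝓝[≠] z₀, dist z₀ y < r - dist x z₀ := by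
      apply mem_nhdsWithin_of_mem_nhds
      have hb : Metric.ball z₀ (r - dist x z₀) ∈ 𝓝 z₀ :=
        Metric.ball_mem_nhds z₀ (by linarith)
      filter_upwards [hb] with y hy
      rw [dist_comm]; exact Metric.mem_ball.mp hy
    obtain ⟨y, hy1, hy2⟩ := (hfreq.and_eventually hev).exists
    have hd0 : 0 < dist z₀ y := by
      by_contra hd
      push_neg at hd
      have h0 : dist z₀ y = 0 := le_antisymm hd dist_nonneg
      rw [h0, div_zero] at hy1
      linarith
    have hdrop : μ' * dist z₀ y < u z₀ - u y := by
      have h2 : μ' * dist z₀ y < max (u z₀ - u y) 0 := (lt_div_iff₀ hd0).mp hy1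
      rcases lt_max_iff.mp h2 with h | h
      · exact h
      · nlinarith
    have hyK : y ∈ K := by
      rw [hK, Metric.mem_closedBall, dist_comm]
      have := dist_triangle x z₀ y
      linarith
    have hmy := hmin hyK
    simp only [Set.mem_setOf_eq] at hmy
    have htri : μ * dist x y ≤ μ * (dist x z₀ + dist z₀ y) :=
      mul_le_mul_of_nonneg_left (dist_triangle x z₀ y) hμ0.le
    nlinarith
  · refine ⟨z₀, heq, ?_⟩
    have hx := hmin (Metric.mem_closedBall_self hr.le)
    simp only [Set.mem_setOf_eq, dist_self, mul_zero, add_zero] at hx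
    rw [← heq]
    exact hx

end Aux

theorem stmt14 {X : Type*} [MetricSpace X] [ProperSpace X] (hgeo : IsGeodesicSpace X)
    (Ω : Set X) (hΩo : IsOpen Ω) (hΩc : IsConnected Ω) (hΩb : Bornology.IsBounded Ω)
    (hΩne : Ω ≠ Set.univ)
    (l : ℝ) (hl : 0 < l)
    (S : Set (X → ℝ)) (hSne : S.Nonempty)
    (hS : ∀ u ∈ S, (∀ x ∈ Ω, 0 ≤ u x) ∧ LocLipOn Ω u ∧
      ∀ x ∈ Ω, l * u x ≤ mSubslope u x)
    (w : X → ℝ) (hw : ∀ x, w x = sInf ((fun u : X → ℝ => u x) '' S))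
    (hwlip : LocLipOn Ω w) :
    (∀ x ∈ Ω, 0 ≤ w x) ∧ ∀ x ∈ Ω, l * w x ≤ mSubslope w x := by
  have hw0 : ∀ x ∈ Ω, 0 ≤ w x := by
    intro x hx
    rw [hw x]
    apply Real.sInf_nonneg
    rintro _ ⟨u, hu, rfl⟩
    exact (hS u hu).1 x hx
  have hwle : ∀ u ∈ S, ∀ x ∈ Ω, w x ≤ u x := by
    intro u hu x hx
    rw [hw x]
    refine csInf_le ⟨0, ?_⟩ ⟨u, hu, rfl⟩
    rintro _ ⟨v, hv, rfl⟩
    exact (hS v hv).1 x hx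
  refine ⟨hw0, fun x hx => ?_⟩
  by_contra hcon
  push_neg at hcon
  have hne : (𝓝[≠] x).NeBot := hgeo.punctured_neBot x
  obtain ⟨Kw, t, ht, hL⟩ := hwlip x hx
  rw [hΩo.nhdsWithin_eq hx] at ht
  have hbdd : (𝓝[≠] x).IsBoundedUnder (· ≤ ·)
      (fun y => max (w x - w y) 0 / dist x y) := quot_bddAbove ht hL
  have h0 : 0 ≤ mSubslope w x :=
    le_limsup_of_frequently_le
      (Eventually.frequently (Eventually.of_forall fun y => quot_nonneg w x y)) hbdd
  have hwx : 0 < w x := by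
    rcases lt_or_eq_of_le (hw0 x hx) with h | h
    · exact h
    · exfalso; rw [← h, mul_zero] at hcon; linarith
  set c : ℝ := (mSubslope w x + l * w x) / 2 with hc
  have hc1 : mSubslope w x < c := by rw [hc]; linarith
  have hc2 : c < l * w x := by rw [hc]; linarith
  have hc0 : 0 < c := lt_of_le_of_lt h0 hc1
  have hev : ∀ᶠ y in 𝓝[≠] x, max (w x - w y) 0 / dist x y < c :=
    eventually_lt_of_limsup_lt hc1 hbdd
  rw [eventually_nhdsWithin_iff] at hev
  obtain ⟨ε, hε, hevball⟩ := Metric.eventually_nhds_iff_ball.mp hev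
  obtain ⟨r₁, hr₁, hball⟩ := (Metric.nhds_basis_closedBall.mem_iff).mp (hΩo.mem_nhds hx)
  set r : ℝ := min (min (ε / 2) r₁) ((l * w x - c) / (2 * l * c)) with hrdef
  have hrpos : 0 < r := by
    apply lt_min (lt_min (by linarith) hr₁)
    apply div_pos (by linarith) (by positivity)
  have hrε : r < ε := lt_of_le_of_lt (le_trans (min_le_left _ _) (min_le_left _ _)) (by linarith)
  have hrr₁ : r ≤ r₁ := le_trans (min_le_left _ _) (min_le_right _ _)
  have hrc : r ≤ (l * w x - c) / (2 * l * c) := min_le_right _ _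
  have hballΩ : Metric.closedBall x r ⊆ Ω :=
    subset_trans (Metric.closedBall_subset_closedBall hrr₁) hball
  -- cone bound for w on the closed ball
  have hcone : ∀ y ∈ Metric.closedBall x r, w x - c * dist x y ≤ w y := by
    intro y hy
    rcases eq_or_ne y x with rfl | hyx
    · simp
    · have hyb : y ∈ Metric.ball x ε :=
        Metric.mem_ball.mpr (lt_of_le_of_lt (Metric.mem_closedBall.mp hy) hrε)
      have hq := hevball y hyb hyx
      have hd : (0:ℝ) < dist x y := dist_pos.mpr (Ne.symm hyx)
      rw [div_lt_iff₀ hd] at hq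
      have := le_max_left (w x - w y) 0
      linarith [lt_of_le_of_lt this hq]
  set m : ℝ := l * (w x - c * r) with hm
  have hcm : c < m := by
    have h1 : l * c * r ≤ l * c * ((l * w x - c) / (2 * l * c)) :=
      mul_le_mul_of_nonneg_left hrc (by positivity)
    have h2 : l * c * ((l * w x - c) / (2 * l * c)) = (l * w x - c) / 2 := by
      field_simp
    rw [h2] at h1
    rw [hm]; nlinarith
  set μ : ℝ := c + (m - c) / 3 with hμdef
  set μ' : ℝ := c + 2 * (m - c) / 3 with hμ'def
  have hμ0 : 0 < μ := by rw [hμdef]; linarith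
  have hμμ' : μ < μ' := by rw [hμdef, hμ'def]; linarith
  have hμ'm : μ' < m := by rw [hμ'def]; linarith
  set δ : ℝ := (μ - c) * r / 2 with hδdef
  have hδ : 0 < δ := by
    rw [hδdef]
    apply div_pos (mul_pos (by rw [hμdef]; linarith) hrpos) (by norm_num)
  -- pick u ∈ S with u x < w x + δ
  have himne : ((fun u : X → ℝ => u x) '' S).Nonempty := hSne.image _
  obtain ⟨_, ⟨u, huS, rfl⟩, hux⟩ := Real.lt_sInf_add_pos himne hδ
  rw [← hw x] at hux
  obtain ⟨hu0, hulip, husub⟩ := hS u huS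
  -- subslope lower bound for u on the ball
  have hsub : ∀ z ∈ Metric.closedBall x r, dist x z < r → m ≤ mSubslope u z := by
    intro z hz _
    have hzΩ : z ∈ Ω := hballΩ hz
    have h1 : w x - c * r ≤ w z := by
      have h2 := hcone z hz
      have h3 : c * dist x z ≤ c * r :=
        mul_le_mul_of_nonneg_left (by rw [dist_comm]; exact Metric.mem_closedBall.mp hz) hc0.le
      linarith
    have h4 : w z ≤ u z := hwle u huS z hzΩ
    have h5 : l * (w x - c * r) ≤ l * u z :=
      mul_le_mul_of_nonneg_left (by linarith) hl.le
    exact le_trans h5 (husub z hzΩ)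
  have hcont : ContinuousOn u (Metric.closedBall x r) :=
    (LocLipOn.continuousOn' hΩo hulip).mono hballΩ
  obtain ⟨z₀, hz₀d, hz₀drop⟩ := drop_lemma hgeo hrpos hμ0 hμμ' hμ'm hcont hsub
  have hz₀K : z₀ ∈ Metric.closedBall x r := by
    rw [Metric.mem_closedBall, dist_comm, hz₀d]
  have hz₀Ω : z₀ ∈ Ω := hballΩ hz₀K
  have h6 : w x - c * r ≤ w z₀ := by
    have := hcone z₀ hz₀K
    rw [hz₀d] at this
    exact this
  have h7 : w z₀ ≤ u z₀ := hwle u huS z₀ hz₀Ω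
  -- contradiction
  have hfinal : (μ - c) * r < δ := by linarith
  rw [hδdef] at hfinal
  have hμc : 0 < μ - c := by rw [hμdef]; linarith
  nlinarith
end

section
/- Let (X,d) be a proper geodesic metric space, Ω ⊊ X a bounded domain, λ > 0. Let u, v : cl(Ω) → ℝ be continuous, locally Lipschitz in Ω, with u a Monge subsolution (|∇⁻u| ≤ λ in Ω) and v a Monge supersolution (|∇⁻v| ≥ λ in Ω) of the eikonal equation |∇w| = λ. If u ≤ v on ∂Ω, then u ≤ v on cl(Ω). -/
open Metric Filter Set Topology

lemma geo_nebot {X : Type*} [MetricSpace X] (hgeo : IsGeodesicSpace X) (x y : X) (hxy : x ≠ y) :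
    (𝓝[≠] x).NeBot := by
  rw [← mem_closure_iff_nhdsWithin_neBot, Metric.mem_closure_iff]
  intro ε hε
  obtain ⟨γ, h0, hd, hiso⟩ := hgeo x y
  have hdpos : 0 < dist x y := dist_pos.2 hxy
  set t := min (ε/2) (dist x y) with ht
  have htpos : 0 < t := lt_min (by linarith) hdpos
  have hdist : dist x (γ t) = t := by
    rw [← h0, hiso 0 t, abs_sub_comm, sub_zero, abs_of_pos htpos]
  refine ⟨γ t, ?_, ?_⟩
  · intro h
    simp only [mem_singleton_iff] at h
    rw [h, dist_self] at hdist
    exact htpos.ne hdist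
  · rw [hdist]
    calc t ≤ ε/2 := min_le_left _ _
      _ < ε := by linarith

theorem stmt15 {X : Type*} [MetricSpace X] [ProperSpace X] (hgeo : IsGeodesicSpace X)
    (Ω : Set X) (hΩo : IsOpen Ω) (hΩc : IsConnected Ω) (hΩb : Bornology.IsBounded Ω)
    (hΩne : Ω ≠ Set.univ)
    (l : ℝ) (hl : 0 < l)
    (u v : X → ℝ)
    (hucont : ContinuousOn u (closure Ω)) (hvcont : ContinuousOn v (closure Ω))
    (hulip : LocLipOn Ω u) (hvlip : LocLipOn Ω v)
    (hsub : ∀ x ∈ Ω, mSubslope u x ≤ l) (hsup : ∀ x ∈ Ω, l ≤ mSubslope v x)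
    (hbdry : ∀ x ∈ frontier Ω, u x ≤ v x) :
    ∀ x ∈ closure Ω, u x ≤ v x := by
  by_contra hcon
  push_neg at hcon
  obtain ⟨xs, hxs, hxslt⟩ := hcon
  have hK : IsCompact (closure Ω) := hΩb.isCompact_closure
  have hne : (closure Ω).Nonempty := ⟨xs, hxs⟩
  obtain ⟨xm, hxm, hxmmin⟩ := hK.exists_isMinOn hne hucont
  set m := u xm with hm
  set C := u xs - m with hC
  have hCnn : 0 ≤ C := sub_nonneg.2 (show m ≤ u xs from hxmmin hxs)
  have hvu : 0 < u xs - v xs := sub_pos.2 hxslt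
  set δ' : ℝ := min (1/2) ((u xs - v xs) / (2 * (C + 1))) with hδ
  have hδpos : 0 < δ' := lt_min (by norm_num) (div_pos hvu (by linarith))
  have hδle : δ' ≤ 1/2 := min_le_left _ _
  have hkey : δ' * C ≤ (u xs - v xs) / 2 := by
    have h1 : δ' * C ≤ (u xs - v xs) / (2 * (C + 1)) * (C + 1) := by
      apply mul_le_mul (min_le_right _ _) (by linarith) hCnn
      positivity
    have h2 : (u xs - v xs) / (2 * (C + 1)) * (C + 1) = (u xs - v xs) / 2 := by
      field_simp
    linarith [h1.trans_eq h2]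
  have hmin : ∀ z ∈ closure Ω, m ≤ u z := fun z hz => hxmmin hz
  clear_value δ'
  clear_value C
  clear_value m
  set μ : ℝ := 1 - δ' with hμ
  have hμ0 : 0 < μ := by rw [hμ]; linarith
  have hμ1 : μ < 1 := by rw [hμ]; linarith
  set w : X → ℝ := fun y => μ * u y + (1 - μ) * m with hw
  have hwcont : ContinuousOn (fun y => w y - v y) (closure Ω) :=
    (((continuousOn_const.mul hucont).add continuousOn_const).sub hvcont)
  obtain ⟨x₀, hx₀, hx₀max⟩ := hK.exists_isMaxOn hne hwcont
  have hpos : 0 < w xs - v xs := by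
    have he : w xs - v xs = (u xs - v xs) - δ' * C := by
      show μ * u xs + (1 - μ) * m - v xs = (u xs - v xs) - δ' * C
      rw [hμ, hC, hm]; ring
    rw [he]; linarith
  have hmaxpos : 0 < w x₀ - v x₀ := lt_of_lt_of_le hpos (hx₀max hxs)
  have hx₀Ω : x₀ ∈ Ω := by
    by_contra hx
    have hfr : x₀ ∈ frontier Ω := by rw [hΩo.frontier_eq]; exact ⟨hx₀, hx⟩
    have h1 : u x₀ ≤ v x₀ := hbdry _ hfr
    have h2 : m ≤ u x₀ := hmin _ (frontier_subset_closure hfr)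
    have h3 : w x₀ ≤ u x₀ := by
      show μ * u x₀ + (1 - μ) * m ≤ u x₀
      nlinarith
    linarith
  have hΩnhds : Ω ∈ 𝓝 x₀ := hΩo.mem_nhds hx₀Ω
  have hnb : (𝓝[≠] x₀).NeBot := by
    obtain ⟨y, hy⟩ : ∃ y, y ∉ Ω := by
      by_contra h; push_neg at h; exact hΩne (eq_univ_of_forall h)
    exact geo_nebot hgeo x₀ y (fun h => hy (h ▸ hx₀Ω))
  set fu : X → ℝ := fun y => max (u x₀ - u y) 0 / dist x₀ y with hfu
  set fv : X → ℝ := fun y => max (v x₀ - v y) 0 / dist x₀ y with hfv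
  have hfunn : ∀ y, 0 ≤ fu y := fun y => div_nonneg (le_max_right _ _) dist_nonneg
  have hfvnn : ∀ y, 0 ≤ fv y := fun y => div_nonneg (le_max_right _ _) dist_nonneg
  have hfucob : (𝓝[≠] x₀).IsCoboundedUnder (· ≤ ·) fu := isCoboundedUnder_le_of_le _ hfunn
  have hfvcob : (𝓝[≠] x₀).IsCoboundedUnder (· ≤ ·) fv := isCoboundedUnder_le_of_le _ hfvnn
  -- Lipschitz bound : fu is bounded above near x₀
  have hbdd : (𝓝[≠] x₀).IsBoundedUnder (· ≤ ·) fu := by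
    obtain ⟨K, t, ht, hlip⟩ := hulip x₀ hx₀Ω
    rw [nhdsWithin_eq_nhds.2 hΩnhds] at ht
    refine ⟨(K : ℝ), eventually_map.2 ?_⟩
    filter_upwards [nhdsWithin_le_nhds ht, self_mem_nhdsWithin] with y hyt hyne
    have hd : 0 < dist x₀ y := dist_pos.2 (Ne.symm hyne)
    have h1 : u x₀ - u y ≤ K * dist x₀ y := by
      have h2 := hlip.dist_le_mul x₀ (mem_of_mem_nhds ht) y hyt
      rw [Real.dist_eq] at h2
      calc u x₀ - u y ≤ |u x₀ - u y| := le_abs_self _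
        _ ≤ K * dist x₀ y := h2
    have h3 : max (u x₀ - u y) 0 ≤ (K : ℝ) * dist x₀ y := max_le h1 (by positivity)
    calc fu y = max (u x₀ - u y) 0 / dist x₀ y := rfl
      _ ≤ ((K : ℝ) * dist x₀ y) / dist x₀ y := (div_le_div_iff_of_pos_right hd).2 h3
      _ = (K : ℝ) := mul_div_cancel_right₀ _ hd.ne'
  -- eventually fv ≤ μ * fu
  have hev : ∀ᶠ y in 𝓝[≠] x₀, fv y ≤ μ * fu y := by
    filter_upwards [nhdsWithin_le_nhds hΩnhds, self_mem_nhdsWithin] with y hyΩ hyne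
    have hd : 0 < dist x₀ y := dist_pos.2 (Ne.symm hyne)
    have h2 : w y - v y ≤ w x₀ - v x₀ := hx₀max (subset_closure hyΩ)
    have key : v x₀ - v y ≤ μ * (u x₀ - u y) := by
      have h4 : w x₀ - w y = μ * (u x₀ - u y) := by
        show μ * u x₀ + (1 - μ) * m - (μ * u y + (1 - μ) * m) = _
        ring
      linarith
    have hmax : max (v x₀ - v y) 0 ≤ μ * max (u x₀ - u y) 0 := by
      rw [mul_max_of_nonneg _ _ hμ0.le, mul_zero]
      exact max_le_max key le_rfl
    calc fv y = max (v x₀ - v y) 0 / dist x₀ y := rfl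
      _ ≤ (μ * max (u x₀ - u y) 0) / dist x₀ y := (div_le_div_iff_of_pos_right hd).2 hmax
      _ = μ * fu y := mul_div_assoc _ _ _
  set ε : ℝ := l * (1 - μ) / (2 * μ) with hε
  have hεpos : 0 < ε := div_pos (by nlinarith) (by linarith)
  have hlimu : limsup fu (𝓝[≠] x₀) < l + ε := lt_of_le_of_lt (hsub x₀ hx₀Ω) (by linarith)
  have hevu : ∀ᶠ y in 𝓝[≠] x₀, fu y < l + ε := eventually_lt_of_limsup_lt hlimu hbdd
  have hfinal : limsup fv (𝓝[≠] x₀) ≤ μ * (l + ε) := by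
    apply limsup_le_of_le hfvcob
    filter_upwards [hev, hevu] with y h1 h2
    calc fv y ≤ μ * fu y := h1
      _ ≤ μ * (l + ε) := by nlinarith [hfunn y]
  have hcontra : l ≤ μ * (l + ε) := le_trans (hsup x₀ hx₀Ω) hfinal
  have heq : μ * (l + ε) = μ * l + l * (1 - μ) / 2 := by
    rw [hε]; field_simp
  nlinarith
end

section
/- Let (X,d) be a proper geodesic metric space, Ω ⊊ X a bounded domain, and u : Ω → ℝ locally Lipschitz satisfying comparison with cones from below. Then for every x₀ ∈ Ω and every r > 0 with cl(B_r(x₀)) ⊆ Ω, there exists x_r on the sphere ∂B_r(x₀) such that u(x₀) − u(x_r) ≥ |∇⁻u|(x₀)·r. -/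
open Metric Filter Set Topology

theorem stmt17 {X : Type*} [MetricSpace X] [ProperSpace X] (hgeo : IsGeodesicSpace X)
    (Ω : Set X) (hΩo : IsOpen Ω) (hΩc : IsConnected Ω) (hΩb : Bornology.IsBounded Ω)
    (hΩne : Ω ≠ Set.univ)
    (u : X → ℝ) (hlip : LocLipOn Ω u) (hcc : CompCones Ω u) :
    ∀ x₀ ∈ Ω, ∀ r : ℝ, 0 < r → closure (Metric.ball x₀ r) ⊆ Ω →
      ∃ x_r : X, dist x₀ x_r = r ∧ mSubslope u x₀ * r ≤ u x₀ - u x_r := by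
  intro x₀ hx₀ r hr hcl
  have hrne : r ≠ 0 := ne_of_gt hr
  -- a point outside Ω
  obtain ⟨q, hq⟩ : ∃ q, q ∉ Ω := by
    by_contra h
    push_neg at h
    exact hΩne (Set.eq_univ_of_forall h)
  obtain ⟨γ, hγ0, hγd, hγiso⟩ := hgeo x₀ q
  have hdq : r ≤ dist x₀ q := by
    by_contra h
    push_neg at h
    exact hq (hcl (subset_closure (by simpa [Metric.mem_ball, dist_comm] using h)))
  have hdist : ∀ s : ℝ, 0 ≤ s → dist x₀ (γ s) = s := by
    intro s hs
    have h1 : dist (γ 0) (γ s) = |0 - s| := hγiso 0 s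
    rw [hγ0] at h1
    rw [h1, zero_sub, abs_neg, abs_of_nonneg hs]
  set p := γ r with hp_def
  have hp : dist x₀ p = r := hdist r hr.le
  -- `x₀` is not isolated
  haveI hne : (𝓝[≠] x₀).NeBot := by
    rw [← mem_closure_iff_nhdsWithin_neBot, Metric.mem_closure_iff]
    intro ε hε
    have hpos : 0 < min (ε / 2) r := lt_min (by linarith) hr
    have hd := hdist (min (ε / 2) r) hpos.le
    refine ⟨γ (min (ε / 2) r), ?_, ?_⟩
    · simp only [Set.mem_compl_iff, Set.mem_singleton_iff]
      intro hcontra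
      rw [hcontra, dist_self] at hd
      exact absurd hd.symm (ne_of_gt hpos)
    · rw [hd]
      calc min (ε / 2) r ≤ ε / 2 := min_le_left _ _
        _ < ε := by linarith
  -- `p` is in the closure of the ball, at distance exactly `r`
  have hpball : p ∈ closure (Metric.ball x₀ r) := by
    rw [Metric.mem_closure_iff]
    intro ε hε
    set s := r - min (ε / 2) (r / 2) with hs_def
    have h1 : 0 < min (ε / 2) (r / 2) := lt_min (by linarith) (by linarith)
    have h2 : min (ε / 2) (r / 2) ≤ r / 2 := min_le_right _ _
    have hs0 : 0 ≤ s := by simp only [hs_def]; linarith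
    refine ⟨γ s, ?_, ?_⟩
    · rw [Metric.mem_ball, dist_comm, hdist s hs0]
      simp only [hs_def]; linarith
    · have : dist p (γ s) = |r - s| := hγiso r s
      rw [this, hs_def]
      rw [show r - (r - min (ε / 2) (r / 2)) = min (ε / 2) (r / 2) by ring]
      rw [abs_of_nonneg h1.le]
      calc min (ε / 2) (r / 2) ≤ ε / 2 := min_le_left _ _
        _ < ε := by linarith
  have hpnb : p ∉ Metric.ball x₀ r := by
    rw [Metric.mem_ball, dist_comm, hp]
    exact lt_irrefl r
  have hpΩ : p ∈ Ω := hcl hpball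
  -- the "sphere" `T = closure(ball) \ ball` and the minimum of `u` on it
  set T : Set X := closure (Metric.ball x₀ r) \ Metric.ball x₀ r with hT_def
  have hTc : IsClosed T := isClosed_closure.sdiff isOpen_ball
  have hcball : IsCompact (closure (Metric.ball x₀ r)) :=
    (isCompact_closedBall x₀ r).of_isClosed_subset isClosed_closure
      Metric.closure_ball_subset_closedBall
  have hTcomp : IsCompact T := hcball.of_isClosed_subset hTc Set.diff_subset
  have hTne : T.Nonempty := ⟨p, hpball, hpnb⟩
  have hTsphere : ∀ z ∈ T, dist x₀ z = r := by
    rintro z ⟨hz1, hz2⟩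
    have h1 : dist z x₀ ≤ r := Metric.closure_ball_subset_closedBall hz1
    have h2 : ¬ dist z x₀ < r := hz2
    rw [dist_comm]
    exact le_antisymm h1 (not_lt.mp h2)
  have hTΩ : T ⊆ Ω := fun z hz => hcl hz.1
  -- continuity of u on Ω
  have hcont : ∀ x ∈ Ω, ContinuousAt u x := by
    intro x hx
    obtain ⟨K, t, htmem, hK⟩ := hlip x hx
    have ht : t ∈ 𝓝 x := by rwa [hΩo.nhdsWithin_eq hx] at htmem
    exact hK.continuousOn.continuousAt ht
  have hcontT : ContinuousOn u T := fun z hz => (hcont z (hTΩ hz)).continuousWithinAt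
  obtain ⟨x_r, hx_rT, hmin⟩ := hTcomp.exists_isMinOn hTne hcontT
  have hx_rd : dist x₀ x_r = r := hTsphere x_r hx_rT
  set m : ℝ := u x_r with hm_def
  have hfrb : frontier (Metric.ball x₀ r) ⊆ T := by
    rw [isOpen_ball.frontier_eq]
  -- Step 1: minimum principle, `m ≤ u x₀`
  have hmle : m ≤ u x₀ := by
    have := hcc (Metric.ball x₀ r) isOpen_ball hcball hcl p ⟨hpΩ, hpnb⟩ m 0 le_rfl
      (fun z hz => by
        have := hmin (hfrb hz)
        simpa using this)
      x₀ (subset_closure (Metric.mem_ball_self hr))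
    simpa using this
  set κ : ℝ := (m - u x₀) / r with hκ_def
  have hκ : κ ≤ 0 := div_nonpos_of_nonpos_of_nonneg (by linarith) hr.le
  have hκr : κ * r = m - u x₀ := div_mul_cancel₀ _ hrne
  -- Step 2: cone comparison on the punctured ball
  set O : Set X := Metric.ball x₀ r \ {x₀} with hO_def
  have hOopen : IsOpen O := isOpen_ball.sdiff isClosed_singleton
  have hOsub : closure O ⊆ closure (Metric.ball x₀ r) := closure_mono Set.diff_subset
  have hOcomp : IsCompact (closure O) := hcball.of_isClosed_subset isClosed_closure hOsub
  have hOΩ : closure O ⊆ Ω := hOsub.trans hcl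
  have hx₀O : x₀ ∈ Ω \ O := ⟨hx₀, fun h => h.2 rfl⟩
  have hcone : ∀ z ∈ closure O, u x₀ + κ * dist x₀ z ≤ u z := by
    apply hcc O hOopen hOcomp hOΩ x₀ hx₀O (u x₀) κ hκ
    intro z hz
    rw [hOopen.frontier_eq] at hz
    obtain ⟨hz1, hz2⟩ := hz
    by_cases hzx : z = x₀
    · subst hzx; simp
    · have hznb : z ∉ Metric.ball x₀ r := by
        intro hb
        exact hz2 ⟨hb, hzx⟩
      have hzT : z ∈ T := ⟨hOsub hz1, hznb⟩
      have hdz : dist x₀ z = r := hTsphere z hzT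
      rw [hdz]
      have : u x₀ + κ * r = m := by rw [hκr]; ring
      rw [this]
      exact hmin hzT
  -- Step 3: bound the subslope
  have hls : mSubslope u x₀ ≤ -κ := by
    apply Filter.limsup_le_of_le
    · exact isCoboundedUnder_le_of_le _ (fun y => div_nonneg (le_max_right _ _) dist_nonneg)
    · have hball : ∀ᶠ y in 𝓝[≠] x₀, y ∈ Metric.ball x₀ r :=
        eventually_nhdsWithin_of_eventually_nhds
          (isOpen_ball.eventually_mem (Metric.mem_ball_self hr))
      filter_upwards [hball, eventually_mem_nhdsWithin] with y hyb hyne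
      have hyO : y ∈ O := ⟨hyb, hyne⟩
      have h1 : u x₀ + κ * dist x₀ y ≤ u y := hcone y (subset_closure hyO)
      have hd0 : 0 < dist x₀ y := by
        rw [dist_pos]
        exact fun h => hyne h.symm
      rw [div_le_iff₀ hd0]
      apply max_le
      · linarith
      · exact mul_nonneg (neg_nonneg.mpr hκ) dist_nonneg
  refine ⟨x_r, hx_rd, ?_⟩
  have : mSubslope u x₀ * r ≤ -κ * r := mul_le_mul_of_nonneg_right hls hr.le
  calc mSubslope u x₀ * r ≤ -κ * r := this
    _ = u x₀ - m := by rw [neg_mul, hκr]; ring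
end
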